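/- arXiv:1507.06098 — 5 statements merged into one kernel-verified Lean document; each statement's English description precedes it below -/
import Mathlib

section
/- Let V be a ℤ-graded vector space with finite-dimensional homogeneous components, L(0) the grading operator (L(0)v = n·v for v of degree n), and φ : ℂˣ → End-valued maps satisfying e^{aL(0)} φ(z) e^{-aL(0)} = e^{a·w} φ(e^a z) for all a ∈ ℂ, where w ∈ ℤ is a fixed weight. Then φ(z) = Σ_{n∈ℤ} φ_n z^{-n-1}, where each φ_n is a homogeneous linear operator on V of weight w - n - 1, given by φ_n v = π_{w-n-1+m} φ(1) v for v of degree m. -/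
/- STATEMENT 0: Laurent expansion of a field of fixed weight from the
L(0)-conjugation formula, with homogeneous coefficient operators.
V is modeled by an internal ℤ-grading `A`; the algebraic completion V̄ by
functions `ℤ → V` whose n-th value is the degree-n component (in `A n`);
`φ z : V →ₗ[ℂ] (ℤ → V)` models an element of Hom(V, V̄). -/

open Complex

theorem stmt0
    (V : Type) [AddCommGroup V] [Module ℂ V]
    (A : ℤ → Submodule ℂ V)
    (hInt : DirectSum.IsInternal fun n => A n)
    (hfin : ∀ n : ℤ, FiniteDimensional ℂ (A n))
    (hbdd : ∃ N₀ : ℤ, ∀ n < N₀, A n = ⊥)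
    (φ : ℂ → V →ₗ[ℂ] (ℤ → V))
    (hφA : ∀ (z : ℂ) (v : V) (n : ℤ), (φ z v) n ∈ A n)
    (hanal : ∀ (l : Module.Dual ℂ V) (v : V) (n : ℤ),
      AnalyticOn ℂ (fun z => l ((φ z v) n)) {z : ℂ | z ≠ 0})
    (w : ℤ)
    -- the conjugation formula  e^{aL(0)} φ(z) e^{-aL(0)} = e^{aw} φ(e^a z),
    -- read off on the degree-n component of φ(z) applied to a vector of degree m
    (hconj : ∀ (a z : ℂ), z ≠ 0 → ∀ (m : ℤ) (v : V), v ∈ A m → ∀ n : ℤ,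
      Complex.exp (a * n) • Complex.exp (-(a * m)) • (φ z v) n
        = Complex.exp (a * w) • (φ (Complex.exp a * z) v) n) :
    -- conclusion: φ(z) = Σ_{n∈ℤ} φ_n z^{-n-1} with φ_n v := π_{w-n-1+m} (φ(1) v)
    -- for v of degree m; each φ_n is homogeneous of weight w - n - 1.
    ∀ (z : ℂ), z ≠ 0 → ∀ (m : ℤ) (v : V), v ∈ A m → ∀ n : ℤ,
      (φ z v) (w - n - 1 + m) = z ^ (-n - 1 : ℤ) • (φ 1 v) (w - n - 1 + m) ∧
      (φ 1 v) (w - n - 1 + m) ∈ A (m + (w - n - 1)) := by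
  intro z hz m v hv n
  refine ⟨?_, by rw [show m + (w - n - 1) = w - n - 1 + m by ring]; exact hφA 1 v _⟩
  have ha : Complex.exp (Complex.log z) = z := Complex.exp_log hz
  set a := Complex.log z with ha'
  have h := hconj a 1 one_ne_zero m v hv (w - n - 1 + m)
  rw [mul_one, ha] at h
  have hk : (φ z v) (w - n - 1 + m)
      = ((Complex.exp (a * w))⁻¹ * (Complex.exp (a * ((w : ℤ) - n - 1 + m : ℤ)) * Complex.exp (-(a * m)))) • (φ 1 v) (w - n - 1 + m) := by
    rw [mul_smul, mul_smul, eq_inv_smul_iff₀ (Complex.exp_ne_zero _)]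
    exact h.symm
  rw [hk]
  congr 1
  rw [← Complex.exp_add, ← Complex.exp_neg, ← Complex.exp_add]
  have : -(a * w) + (a * ((w : ℤ) - n - 1 + m : ℤ) + -(a * m)) = ((-n - 1 : ℤ) : ℂ) * a := by
    push_cast
    ring
  rw [this, Complex.exp_int_mul, ha]
end

section
/- Let g(z_p, z_q) be a formal Laurent series in two variables with only finitely many negative powers of z_q and only finitely many positive powers of z_p. Suppose (z_p - z_q)^N · g(z_p, z_q) is a Laurent polynomial P(z_p, z_q) for some N ∈ ℤ₊. Then g(z_p, z_q) equals the product of P(z_p, z_q) with the expansion of (z_p - z_q)^{-N} as a power series in nonnegative powers of z_q (i.e., the expansion valid in the region |z_p| > |z_q| > 0). -/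
/- STATEMENT 3: a two-variable formal Laurent series g(z_p, z_q) with finitely
many negative powers of z_q and finitely many positive powers of z_p, such that
(z_p - z_q)^N g is a Laurent polynomial P, equals P times the expansion of
(z_p - z_q)^{-N} in nonnegative powers of z_q (region |z_p| > |z_q| > 0).
Series are modeled by coefficient functions ℤ → ℤ → ℂ (first index: power of
z_p, second: power of z_q). -/

open Finset

/-- Coefficients of the product of the polynomial `(z_p - z_q)^N` with a formal
Laurent series `g`. -/
noncomputable def mulDiff2 (N : ℕ) (g : ℤ → ℤ → ℂ) : ℤ → ℤ → ℂ :=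
  fun m n => ∑ j ∈ Finset.range (N + 1),
    ((-1 : ℂ) ^ j * (N.choose j : ℂ)) * g (m - ((N - j : ℕ) : ℤ)) (n - (j : ℤ))


lemma md2_eq (N : ℕ) (g : ℤ → ℤ → ℂ) (m n : ℤ) :
    mulDiff2 N g m n = ∑ j ∈ Finset.range (N + 1),
      ((-1 : ℂ) ^ j * (N.choose j : ℂ)) * g (m - N + j) (n - j) := by
  unfold mulDiff2
  refine Finset.sum_congr rfl fun j hj => ?_
  have hjN : j ≤ N := Nat.lt_succ_iff.mp (Finset.mem_range.mp hj)
  have h1 : ((N - j : ℕ) : ℤ) = (N : ℤ) - j := by push_cast [Nat.cast_sub hjN]; ring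
  have h2 : m - ((N : ℤ) - j) = m - N + j := by ring
  rw [h1, h2]

lemma md2_one (g : ℤ → ℤ → ℂ) (m n : ℤ) :
    mulDiff2 1 g m n = g (m - 1) n - g m (n - 1) := by
  rw [md2_eq, Finset.sum_range_succ, Finset.sum_range_one]
  simp; push_cast; ring

lemma md2_comp (N : ℕ) (g : ℤ → ℤ → ℂ) (m n : ℤ) :
    mulDiff2 (N + 1) g m n = mulDiff2 N (mulDiff2 1 g) m n := by
  rw [md2_eq, md2_eq]
  simp only [md2_one, mul_sub]
  rw [Finset.sum_sub_distrib]
  rw [Finset.sum_range_succ']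
  have hsplit : ∀ i ∈ Finset.range (N + 1),
      (-1 : ℂ) ^ (i + 1) * ((N + 1).choose (i + 1) : ℂ) *
          g (m - ((N + 1 : ℕ) : ℤ) + ((i + 1 : ℕ) : ℤ)) (n - ((i + 1 : ℕ) : ℤ)) =
        -((-1 : ℂ) ^ i * (N.choose i : ℂ) * g (m - N + i) (n - i - 1)) +
          (-1 : ℂ) ^ (i + 1) * (N.choose (i + 1) : ℂ) *
            g (m - N + ((i + 1 : ℕ) : ℤ) - 1) (n - ((i + 1 : ℕ) : ℤ)) := by
    intro i _
    have hc : (((N + 1).choose (i + 1) : ℕ) : ℂ)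
        = (N.choose i : ℂ) + (N.choose (i + 1) : ℂ) := by
      rw [Nat.choose_succ_succ]; push_cast; ring
    rw [hc]
    push_cast
    have e1 : m - ((N : ℤ) + 1) + ((i : ℤ) + 1) = m - N + i := by ring
    have e2 : n - ((i : ℤ) + 1) = n - i - 1 := by ring
    have e3 : m - (N : ℤ) + ((i : ℤ) + 1) - 1 = m - N + i := by ring
    rw [e1, e2, e3]
    ring
  rw [Finset.sum_congr rfl hsplit, Finset.sum_add_distrib]
  rw [Finset.sum_neg_distrib]
  rw [Finset.sum_range_succ (fun x => (-1 : ℂ) ^ (x + 1) * (N.choose (x + 1) : ℂ) *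
    g (m - (N : ℤ) + ((x + 1 : ℕ) : ℤ) - 1) (n - ((x + 1 : ℕ) : ℤ))) N]
  rw [Finset.sum_range_succ' (fun x => (-1 : ℂ) ^ x * (N.choose x : ℂ) *
    g (m - (N : ℤ) + (x : ℤ) - 1) (n - (x : ℤ))) N]
  simp only [Nat.choose_succ_self, Nat.cast_zero, Nat.choose_zero_right, Nat.cast_one,
    pow_zero, Nat.cast_add, Nat.cast_ofNat, Nat.cast_one, mul_zero, zero_mul, add_zero]
  rw [show m - ((N : ℤ) + 1) = m - N - 1 by ring]
  ring

lemma md2_sub (N : ℕ) (g h : ℤ → ℤ → ℂ) (m n : ℤ) :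
    mulDiff2 N (fun a b => g a b - h a b) m n
      = mulDiff2 N g m n - mulDiff2 N h m n := by
  unfold mulDiff2
  rw [← Finset.sum_sub_distrib]
  exact Finset.sum_congr rfl fun j _ => by ring

lemma md2_uniq (N : ℕ) (f : ℤ → ℤ → ℂ) (M : ℤ)
    (hf : ∀ m n : ℤ, n < M → f m n = 0)
    (h0 : ∀ m n : ℤ, mulDiff2 N f m n = 0) : ∀ m n : ℤ, f m n = 0 := by
  have key : ∀ k : ℕ, ∀ m n : ℤ, n < M + k → f m n = 0 := by
    intro k
    induction k with
    | zero => intro m n hn; exact hf m n (by simpa using hn)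
    | succ k ih =>
      intro m n hn
      have h := h0 (m + N) n
      rw [md2_eq, Finset.sum_range_succ'] at h
      have hz : ∀ j ∈ Finset.range N,
          (-1 : ℂ) ^ (j + 1) * (N.choose (j + 1) : ℂ) *
            f (m + N - N + ((j + 1 : ℕ) : ℤ)) (n - ((j + 1 : ℕ) : ℤ)) = 0 := by
        intro j _
        rw [ih _ _ (by push_cast; omega)]
        ring
      rw [Finset.sum_eq_zero hz] at h
      simpa using h
  intro m n
  have hk : n < M + ((n - M).toNat + 1 : ℕ) := by
    have := Int.self_le_toNat (n - M)
    push_cast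
    omega
  exact key _ m n hk

lemma summable_aux (P : ℤ → ℤ → ℂ)
    (hPfin : (Function.support (fun mn : ℤ × ℤ => P mn.1 mn.2)).Finite)
    (c : ℕ → ℂ) (a b : ℤ) :
    Summable (fun j : ℕ => c j * P (a + j) (b - j)) := by
  apply summable_of_ne_finset_zero
    (s := hPfin.toFinset.image (fun p => (p.1 - a).toNat))
  intro j hj
  rcases eq_or_ne (P (a + j) (b - j)) 0 with h | h
  · rw [h, mul_zero]
  · refine absurd (Finset.mem_image.mpr ⟨(a + j, b - j), ?_, by simp⟩) hj
    rw [Set.Finite.mem_toFinset]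
    exact h

noncomputable def hfun (P : ℤ → ℤ → ℂ) (N : ℕ) : ℤ → ℤ → ℂ :=
  fun m n => ∑' j : ℕ, (((N - 1 + j).choose j : ℕ) : ℂ) * P (m + N + j) (n - j)

lemma md2_hfun_one (P : ℤ → ℤ → ℂ)
    (hPfin : (Function.support (fun mn : ℤ × ℤ => P mn.1 mn.2)).Finite)
    (m n : ℤ) : mulDiff2 1 (hfun P 1) m n = P m n := by
  rw [md2_one]
  have hD : Summable (fun j : ℕ => (1 : ℂ) * P (m + j) (n - j)) :=
    summable_aux P hPfin _ m n
  have h1 : hfun P 1 (m - 1) n = ∑' j : ℕ, (1 : ℂ) * P (m + j) (n - j) := by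
    unfold hfun
    refine tsum_congr fun j => ?_
    norm_num
  have h2 : hfun P 1 m (n - 1)
      = ∑' j : ℕ, (1 : ℂ) * P (m + ((j + 1 : ℕ) : ℤ)) (n - ((j + 1 : ℕ) : ℤ)) := by
    unfold hfun
    refine tsum_congr fun j => ?_
    norm_num
    rw [show m + 1 + (j : ℤ) = m + (j + 1) by ring,
      show n - 1 - (j : ℤ) = n - (j + 1) by ring]
  rw [h1, h2, Summable.tsum_eq_zero_add hD]
  push_cast
  simp

lemma md2_hfun_step (P : ℤ → ℤ → ℂ)
    (hPfin : (Function.support (fun mn : ℤ × ℤ => P mn.1 mn.2)).Finite)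
    (N : ℕ) (m n : ℤ) :
    mulDiff2 1 (hfun P (N + 2)) m n = hfun P (N + 1) m n := by
  rw [md2_one]
  set a : ℤ := m + (N : ℤ) + 1 with ha
  set D : ℕ → ℂ := fun j => ((N + 1 + j).choose j : ℂ) * P (a + j) (n - j) with hDdef
  set q : ℕ → ℂ := fun j =>
    (if j = 0 then 0 else ((N + 1 + (j - 1)).choose (j - 1) : ℂ)) * P (a + j) (n - j)
    with hqdef
  have hD : Summable D := summable_aux P hPfin _ a n
  have hq : Summable q := summable_aux P hPfin _ a n
  have h1 : hfun P (N + 2) (m - 1) n = ∑' j, D j := by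
    unfold hfun
    refine tsum_congr fun j => ?_
    rw [hDdef]
    norm_num
    rw [show m - 1 + ((N : ℤ) + 2) + (j : ℤ) = a + j by rw [ha]; ring]
    left
    congr 1
  have h2 : hfun P (N + 2) m (n - 1) = ∑' j, q (j + 1) := by
    unfold hfun
    refine tsum_congr fun j => ?_
    rw [hqdef]
    simp only [Nat.add_sub_cancel, if_neg (Nat.succ_ne_zero j)]
    push_cast
    rw [show m + ((N : ℤ) + 2) + (j : ℤ) = a + (j + 1) by rw [ha]; ring,
      show n - 1 - (j : ℤ) = n - (j + 1) by ring]
  have hq0 : q 0 = 0 := by simp [hqdef]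
  have hshift : ∑' j, q (j + 1) = ∑' j, q j := by
    rw [Summable.tsum_eq_zero_add hq, hq0, zero_add]
  rw [h1, h2, hshift, ← Summable.tsum_sub hD hq]
  unfold hfun
  refine tsum_congr fun j => ?_
  rw [hDdef, hqdef]
  cases j with
  | zero =>
    simp only [if_pos rfl, zero_mul, sub_zero, Nat.cast_zero]
    norm_num [ha]
    rw [show m + ((N : ℤ) + 1) = m + N + 1 by ring]
  | succ j =>
    simp only [if_neg (Nat.succ_ne_zero j), Nat.add_sub_cancel]
    rw [ha]
    rw [show N + (j + 1) = N + 1 + j from by ring]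
    rw [show N + 1 + (j + 1) = (N + 1 + j) + 1 from by ring]
    rw [Nat.choose_succ_succ (N + 1 + j) j]
    push_cast
    ring_nf
    rw [show j.succ = 1 + j from by omega]
    ring

lemma md2_hfun (P : ℤ → ℤ → ℂ)
    (hPfin : (Function.support (fun mn : ℤ × ℤ => P mn.1 mn.2)).Finite) :
    ∀ N : ℕ, ∀ m n : ℤ, mulDiff2 (N + 1) (hfun P (N + 1)) m n = P m n := by
  intro N
  induction N with
  | zero => exact md2_hfun_one P hPfin
  | succ N ih =>
    intro m n
    rw [md2_comp]
    have hstep : mulDiff2 1 (hfun P (N + 2)) = hfun P (N + 1) :=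
      funext fun m => funext fun n => md2_hfun_step P hPfin N m n
    rw [hstep]
    exact ih m n

lemma hfun_vanish (P : ℤ → ℤ → ℂ) (B : ℤ) (hB : ∀ m n : ℤ, n < B → P m n = 0)
    (N : ℕ) : ∀ m n : ℤ, n < B → hfun P N m n = 0 := by
  intro m n hn
  unfold hfun
  have hz : ∀ j : ℕ, (((N - 1 + j).choose j : ℕ) : ℂ) * P (m + N + j) (n - j) = 0 := by
    intro j
    rw [hB _ _ (by omega), mul_zero]
  rw [tsum_congr hz, tsum_zero]

theorem stmt3 (N : ℕ) (hN : 0 < N) (g : ℤ → ℤ → ℂ)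
    -- finitely many negative powers of z_q
    (hq : ∃ M : ℤ, ∀ m n : ℤ, n < M → g m n = 0)
    -- finitely many positive powers of z_p
    (hp : ∃ M : ℤ, ∀ m n : ℤ, M < m → g m n = 0)
    -- (z_p - z_q)^N · g is a Laurent polynomial P
    (P : ℤ → ℤ → ℂ) (hP : ∀ m n : ℤ, mulDiff2 N g m n = P m n)
    (hPfin : (Function.support (fun mn : ℤ × ℤ => P mn.1 mn.2)).Finite) :
    -- then g = P · (z_p - z_q)^{-N}, expanded in nonnegative powers of z_q:
    -- (z_p - z_q)^{-N} = Σ_{j≥0} C(N-1+j, j) z_p^{-N-j} z_q^j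
    ∀ m n : ℤ, g m n =
      ∑' j : ℕ, (((N - 1 + j).choose j : ℕ) : ℂ) * P (m + N + j) (n - j) := by
  obtain ⟨M, hM⟩ := hq
  obtain ⟨B, hB⟩ : ∃ B : ℤ, ∀ m n : ℤ, n < B → P m n = 0 := by
    have hfin : (Prod.snd '' (Function.support fun mn : ℤ × ℤ => P mn.1 mn.2)).Finite :=
      hPfin.image _
    obtain ⟨B, hBmem⟩ := hfin.bddBelow
    refine ⟨B, fun m n hn => ?_⟩
    by_contra h
    exact absurd (hBmem ⟨(m, n), h, rfl⟩) (not_le.mpr hn)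
  obtain ⟨N', rfl⟩ : ∃ N', N = N' + 1 := ⟨N - 1, (Nat.succ_pred_eq_of_pos hN).symm⟩
  have hPh : ∀ m n : ℤ, mulDiff2 (N' + 1) (hfun P (N' + 1)) m n = P m n :=
    md2_hfun P hPfin N'
  have hfvan : ∀ m n : ℤ, n < min M B →
      g m n - hfun P (N' + 1) m n = 0 := by
    intro m n hn
    rw [hM m n (lt_of_lt_of_le hn (min_le_left _ _)),
      hfun_vanish P B hB _ m n (lt_of_lt_of_le hn (min_le_right _ _)), sub_zero]
  have h0 : ∀ m n : ℤ, mulDiff2 (N' + 1) (fun a b => g a b - hfun P (N' + 1) a b) m n = 0 := by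
    intro m n
    rw [md2_sub, hP, hPh, sub_self]
  have huniq := md2_uniq (N' + 1) (fun a b => g a b - hfun P (N' + 1) a b)
    (min M B) hfvan h0
  intro m n
  have h := huniq m n
  have hg : g m n = hfun P (N' + 1) m n := by
    have := sub_eq_zero.mp h
    exact this
  rw [hg]
  rfl
end

section
/- Let V be a graded vector space with grading operator L(0), let φ be an analytic map from ℂ^× to Hom(V, \bar{V}) with weight w ∈ ℤ satisfying [L(0), φ(z)] = z(d/dz)φ(z) + w·φ(z), and let L(-1) be an operator satisfying [L(-1), φ(z)] = (d/dz)φ(z). Then for a ∈ ℂ and z ∈ ℂ^× with |z| > |a|, e^{aL(-1)} φ(z) e^{-aL(-1)} = φ(z + a), where the left side is understood via the convergent expansion of matrix coefficients. -/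
/-
Fix a homogeneous `u ∈ V_(m)`, a degree `n` and a functional `l`, and let
`c i j ζ = ⟨l, L(-1)^i φ(ζ) L(-1)^j u⟩` in degree `n`. The `L(0)`-bracket says that `c i j` solves
the Euler equation `ζ c' = (e - i - j) c` with `e = n - m - w`, so it is a multiple of `ζ^(e-i-j)`;
the `L(-1)`-bracket says `c i j' = c (i+1) j - c i (j+1)`. Hence `γ i j = c i j z * z^(i+j)`
satisfies `(e - i - j) γ i j = γ (i+1) j - γ i (j+1)`. Since `γ i j = 0` for large `i` (the grading
is bounded below), this recursion bounds `γ i j` by `M * (j + B)!` for constants `M`, `B`, so the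
double series converges absolutely for `|a| < |z|`, and it forces the antidiagonal sums
`∑_{p+q=k} (-1)^q γ p q / (p! q!)` to equal `γ 0 0 * (e choose k)`. The double series is thus
`c 0 0 z * (1 + a/z)^e = c 0 0 (z + a)`.
-/

open Complex

/-- Pairing of a functional with an element of the completion V̄. -/
noncomputable def pairF {V : Type} [AddCommGroup V] [Module ℂ V]
    (v' : Module.Dual ℂ V) (w : ℤ → V) : ℂ := ∑' n : ℤ, v' (w n)

/-- The extension of an operator of weight 1 to the completion V̄. -/
def shiftOp {V : Type} [AddCommGroup V] [Module ℂ V]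
    (L : V →ₗ[ℂ] V) (w : ℤ → V) : ℤ → V := fun n => L (w (n - 1))

open Finset

theorem HasSum.sum_antidiagonal {A E : Type*} [AddMonoid A] [HasAntidiagonal A]
    [AddCommMonoid E] [TopologicalSpace E] [ContinuousAdd E] [RegularSpace E] {f : A × A → E}
    {b : E} (hf : HasSum f b) : HasSum (fun k => ∑ p ∈ antidiagonal k, f p) b :=
  (HasAntidiagonal.sigmaAntidiagonalEquivProd.hasSum_iff.2 hf).sigma fun k =>
    (antidiagonal k).hasSum f

theorem Ring.natCast_succ_mul_choose_succ {K : Type*} [Field K] [CharZero K] (a : K) (k : ℕ) :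
    (k + 1 : K) * Ring.choose a (k + 1) = (a - k) * Ring.choose a k := by
  simp only [Ring.choose_eq_smul, Nat.factorial_succ, Nat.cast_mul, Nat.cast_add, Nat.cast_one,
    mul_inv_rev, descPochhammer_succ_right, Polynomial.smeval_mul, Polynomial.smeval_sub,
    Polynomial.smeval_X, pow_one, Polynomial.smeval_natCast, pow_zero, nsmul_eq_mul, mul_one,
    smul_eq_mul]
  field_simp

theorem Finset.Nat.natCast_succ_mul_sum_antidiagonal_succ {R : Type*} [CommSemiring R]
    (w : ℕ → ℕ → R) (k : ℕ) :
    (k + 1 : R) * ∑ p ∈ antidiagonal (k + 1), w p.1 p.2 =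
      ∑ p ∈ antidiagonal k,
        ((p.1 + 1 : R) * w (p.1 + 1) p.2 + (p.2 + 1 : R) * w p.1 (p.2 + 1)) := by
  have hsplit : (k + 1 : R) * ∑ p ∈ antidiagonal (k + 1), w p.1 p.2 =
      ∑ p ∈ antidiagonal (k + 1), (p.1 : R) * w p.1 p.2 +
        ∑ p ∈ antidiagonal (k + 1), (p.2 : R) * w p.1 p.2 := by
    rw [mul_sum, ← sum_add_distrib]
    refine sum_congr rfl fun p hp => ?_
    rw [← add_mul, ← Nat.cast_add, (mem_antidiagonal.1 hp)]
    push_cast; rfl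
  rw [hsplit, sum_add_distrib, sum_antidiagonal_succ, sum_antidiagonal_succ']
  simp

theorem Complex.hasSum_choose_mul_pow {a x : ℂ} (hx : ‖x‖ < 1) :
    HasSum (fun k => Ring.choose a k * x ^ k) ((1 + x) ^ a) := by
  have h := (one_add_cpow_hasFPowerSeriesOnBall_zero (a := a)).hasSum (y := x)
    (by simpa [← ofReal_norm] using hx)
  simpa [binomialSeries, FormalMultilinearSeries.ofScalars_apply_eq, mul_comm] using h

theorem IsOpen.mul_zpow_eq_of_hasDerivAt {f : ℂ → ℂ} {k : ℤ} {s : Set ℂ} (hs : IsOpen s)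
    (hs' : IsPreconnected s) (hs0 : (0 : ℂ) ∉ s)
    (hf : ∀ ζ ∈ s, ∃ d, HasDerivAt f d ζ ∧ ζ * d = k * f ζ) {ζ₀ ζ : ℂ} (h₀ : ζ₀ ∈ s)
    (hζ : ζ ∈ s) : f ζ * ζ₀ ^ k = f ζ₀ * ζ ^ k := by
  have hne : ∀ y ∈ s, y ≠ 0 := fun y hy h => hs0 (h ▸ hy)
  have hg : ∀ y ∈ s, HasDerivAt (fun y => f y * y ^ (-k)) 0 y := by
    intro y hy
    obtain ⟨d, hd, hyd⟩ := hf y hy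
    have h : HasDerivAt (fun y => f y * y ^ (-k)) _ y :=
      hd.mul (hasDerivAt_zpow (-k) y (Or.inl (hne y hy)))
    refine h.congr_deriv ?_
    have : y ^ (-k) = y * y ^ (-k - 1) := by
      rw [← zpow_one_add₀ (hne y hy)]; ring_nf
    rw [this]; push_cast; linear_combination (y ^ (-k - 1)) * hyd
  have h := hs.is_const_of_deriv_eq_zero hs'
    (fun y hy => (hg y hy).differentiableAt.differentiableWithinAt)
    (fun y hy => (hg y hy).deriv) hζ h₀
  have h1 := zpow_ne_zero k (hne ζ hζ)
  have h2 := zpow_ne_zero k (hne ζ₀ h₀)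
  simp only [zpow_neg] at h
  field_simp at h
  linear_combination h

def HasAbsSum {ι E : Type*} [SeminormedAddCommGroup E] (f : ι → E) (b : E) : Prop :=
  Summable (fun i => ‖f i‖) ∧ HasSum f b

theorem HasAbsSum.add {ι E : Type*} [SeminormedAddCommGroup E] {f g : ι → E} {a b : E}
    (hf : HasAbsSum f a) (hg : HasAbsSum g b) : HasAbsSum (fun i => f i + g i) (a + b) :=
  ⟨(hf.1.add hg.1).of_nonneg_of_le (fun _ => norm_nonneg _) fun _ => norm_add_le _ _,
    hf.2.add hg.2⟩

theorem hasAbsSum_zero {ι E : Type*} [SeminormedAddCommGroup E] :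
    HasAbsSum (fun _ : ι => (0 : E)) 0 :=
  ⟨by simp [summable_zero], hasSum_zero⟩

theorem hasAbsSum_sum {ι κ E : Type*} [SeminormedAddCommGroup E] {f : κ → ι → E} {b : κ → E}
    {s : Finset κ} (h : ∀ k ∈ s, HasAbsSum (f k) (b k)) :
    HasAbsSum (fun i => ∑ k ∈ s, f k i) (∑ k ∈ s, b k) :=
  ⟨(summable_sum fun k hk => (h k hk).1).of_nonneg_of_le (fun _ => norm_nonneg _)
    fun _ => norm_sum_le _ _, hasSum_sum fun k hk => (h k hk).2⟩

section DoubleSeries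

variable {γ : ℕ → ℕ → ℂ} {e : ℂ} {I : ℕ}

/-- The coefficient of `x ^ k` in `∑ x ^ p (-x) ^ q γ p q / (p! q!)`. -/
noncomputable def antidiagonalCoeff (γ : ℕ → ℕ → ℂ) (k : ℕ) : ℂ :=
  ∑ p ∈ antidiagonal k, (-1) ^ p.2 / (p.1.factorial * p.2.factorial : ℂ) * γ p.1 p.2

theorem antidiagonalCoeff_eq_choose
    (hrec : ∀ i j : ℕ, (e - i - j) * γ i j = γ (i + 1) j - γ i (j + 1)) (k : ℕ) :
    antidiagonalCoeff γ k = γ 0 0 * Ring.choose e k := by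
  induction k with
  | zero => simp [antidiagonalCoeff]
  | succ k ih =>
    have hk : (k + 1 : ℂ) ≠ 0 := Nat.cast_add_one_ne_zero k
    refine mul_left_cancel₀ hk ?_
    rw [mul_left_comm, Ring.natCast_succ_mul_choose_succ, ← mul_left_comm, ← ih,
      antidiagonalCoeff, Finset.Nat.natCast_succ_mul_sum_antidiagonal_succ
        (fun i j => (-1) ^ j / (i.factorial * j.factorial : ℂ) * γ i j), antidiagonalCoeff, mul_sum]
    refine sum_congr rfl fun p hp => ?_
    rw [← mem_antidiagonal.1 hp, Nat.factorial_succ, Nat.factorial_succ, pow_succ]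
    push_cast
    have h1 : (p.1.factorial : ℂ) ≠ 0 := Nat.cast_ne_zero.2 (Nat.factorial_ne_zero _)
    have h2 : (p.2.factorial : ℂ) ≠ 0 := Nat.cast_ne_zero.2 (Nat.factorial_ne_zero _)
    have h3 : (p.1 + 1 : ℂ) ≠ 0 := Nat.cast_add_one_ne_zero _
    have h4 : (p.2 + 1 : ℂ) ≠ 0 := Nat.cast_add_one_ne_zero _
    field_simp
    linear_combination -hrec p.1 p.2

theorem exists_norm_le_mul_factorial_of_recursion
    (hrec : ∀ i j : ℕ, (e - i - j) * γ i j = γ (i + 1) j - γ i (j + 1))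
    (hvan : ∀ i j, I < i → γ i j = 0) :
    ∃ (M : ℝ) (B : ℕ), ∀ i j, ‖γ i j‖ ≤ M * (j + B).factorial := by
  set M := ∑ i ∈ range (I + 1), ‖γ i 0‖
  set B := ⌈‖e‖⌉₊ + I
  have hM : 0 ≤ M := sum_nonneg fun _ _ => norm_nonneg _
  refine ⟨M, B, fun i j => ?_⟩
  induction j generalizing i with
  | zero =>
    rcases le_or_gt i I with hi | hi
    · calc ‖γ i 0‖ ≤ M := single_le_sum (f := fun i => ‖γ i 0‖) (fun _ _ => norm_nonneg _)
            (mem_range.2 (Nat.lt_succ_of_le hi))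
        _ ≤ M * (0 + B).factorial :=
          le_mul_of_one_le_right hM (by exact_mod_cast Nat.factorial_pos _)
    · rw [hvan i 0 hi, norm_zero]; positivity
  | succ j ih =>
    rcases le_or_gt i I with hi | hi
    · have hcoef : ‖e - i - j‖ ≤ (j + B : ℝ) := by
        have he : ‖e‖ ≤ ⌈‖e‖⌉₊ := Nat.le_ceil _
        have hi' : (i : ℝ) ≤ I := by exact_mod_cast hi
        calc ‖e - i - j‖ ≤ ‖e‖ + i + j := by
              refine (norm_sub_le _ _).trans ?_
              gcongr
              · exact (norm_sub_le _ _).trans (by simp)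
              · simp
          _ ≤ j + B := by simp only [B]; push_cast; linarith
      calc ‖γ i (j + 1)‖ = ‖γ (i + 1) j - (e - i - j) * γ i j‖ := by rw [hrec]; ring_nf
        _ ≤ ‖γ (i + 1) j‖ + ‖e - i - j‖ * ‖γ i j‖ :=
          (norm_sub_le _ _).trans_eq (by rw [norm_mul])
        _ ≤ M * (j + B).factorial + (j + B) * (M * (j + B).factorial) := by
          gcongr; exacts [ih _, ih i]
        _ = M * (j + 1 + B).factorial := by
          rw [show j + 1 + B = j + B + 1 by ring, Nat.factorial_succ]; push_cast; ring
    · rw [hvan i _ hi, norm_zero]; positivity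

theorem summable_norm_of_recursion
    (hrec : ∀ i j : ℕ, (e - i - j) * γ i j = γ (i + 1) j - γ i (j + 1))
    (hvan : ∀ i j, I < i → γ i j = 0) {x : ℂ} (hx : ‖x‖ < 1) :
    Summable fun ij : ℕ × ℕ =>
      ‖x ^ ij.1 / ij.1.factorial * ((-x) ^ ij.2 / ij.2.factorial) * γ ij.1 ij.2‖ := by
  obtain ⟨M, B, hM⟩ := exists_norm_le_mul_factorial_of_recursion hrec hvan
  have hdom := ((Real.summable_pow_div_factorial ‖x‖).mul_of_nonneg
    (summable_descFactorial_mul_geometric_of_norm_lt_one B (r := ‖x‖) (by simpa using hx))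
    (fun _ => by positivity) (fun _ => by positivity)).mul_left M
  refine hdom.of_nonneg_of_le (fun _ => norm_nonneg _) fun ⟨i, j⟩ => ?_
  have hfac : ((j + B).factorial : ℝ) = j.factorial * (j + B).descFactorial B := by
    rw [← Nat.cast_mul, ← Nat.factorial_mul_descFactorial (Nat.le_add_left B j),
      Nat.add_sub_cancel]
  simp only [norm_mul, norm_div, norm_pow, norm_neg, Complex.norm_natCast]
  calc ‖x‖ ^ i / i.factorial * (‖x‖ ^ j / j.factorial) * ‖γ i j‖
      ≤ ‖x‖ ^ i / i.factorial * (‖x‖ ^ j / j.factorial) * (M * (j + B).factorial) := by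
        gcongr; exact hM i j
    _ = M * (‖x‖ ^ i / i.factorial * ((j + B).descFactorial B * ‖x‖ ^ j)) := by
        rw [hfac]; field_simp

theorem hasAbsSum_of_recursion
    (hrec : ∀ i j : ℕ, (e - i - j) * γ i j = γ (i + 1) j - γ i (j + 1))
    (hvan : ∀ i j, I < i → γ i j = 0) {x : ℂ} (hx : ‖x‖ < 1) :
    HasAbsSum
      (fun ij : ℕ × ℕ => x ^ ij.1 / ij.1.factorial * ((-x) ^ ij.2 / ij.2.factorial) * γ ij.1 ij.2)
      (γ 0 0 * (1 + x) ^ e) := by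
  have hsum := summable_norm_of_recursion hrec hvan hx
  refine ⟨hsum, ?_⟩
  obtain ⟨S, hS⟩ := hsum.of_norm
  have hdiag (k : ℕ) : ∑ p ∈ antidiagonal k,
      x ^ p.1 / p.1.factorial * ((-x) ^ p.2 / p.2.factorial) * γ p.1 p.2 =
        γ 0 0 * (Ring.choose e k * x ^ k) := by
    rw [← mul_assoc, ← antidiagonalCoeff_eq_choose hrec, antidiagonalCoeff, sum_mul]
    refine sum_congr rfl fun p hp => ?_
    rw [← mem_antidiagonal.1 hp, neg_pow, pow_add]
    field_simp
  have hS' := hS.sum_antidiagonal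
  simp only [hdiag] at hS'
  rwa [((Complex.hasSum_choose_mul_pow hx).mul_left (γ 0 0)).unique hS']

end DoubleSeries

section Field

variable {V : Type} [AddCommGroup V] [Module ℂ V] {A : ℤ → Submodule ℂ V}
  {φ : ℂ → V →ₗ[ℂ] (ℤ → V)} {L : V →ₗ[ℂ] V}

theorem shiftOp_iterate_apply (x : ℤ → V) (i : ℕ) (n : ℤ) :
    ((shiftOp L)^[i] x) n = (L ^ i) (x (n - i)) := by
  induction i generalizing x with
  | zero => simp
  | succ i ih =>
    rw [Function.iterate_succ_apply, ih, shiftOp, pow_succ, Module.End.mul_apply,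
      Nat.cast_succ, sub_add_eq_sub_sub]

theorem pairF_eq_sum {v' : Module.Dual ℂ V} {t : Finset ℤ} (ht : ∀ d ∉ t, ∀ x ∈ A d, v' x = 0)
    {x : ℤ → V} (hx : ∀ d, x d ∈ A d) : pairF v' x = ∑ d ∈ t, v' (x d) :=
  tsum_eq_sum fun d hd => ht d hd _ (hx d)

theorem pow_apply_mem_of_mem (hL : ∀ (n : ℤ) (v : V), v ∈ A n → L v ∈ A (n + 1))
    {v : V} {n : ℤ} (hv : v ∈ A n) (i : ℕ) : (L ^ i) v ∈ A (n + i) := by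
  induction i with
  | zero => simpa using hv
  | succ i ih =>
    rw [_root_.pow_succ', Module.End.mul_apply, Nat.cast_succ, ← add_assoc]
    exact hL _ _ ih

theorem pairF_shiftOp_iterate_eq_sum (hL : ∀ (n : ℤ) (v : V), v ∈ A n → L v ∈ A (n + 1))
    (hφA : ∀ (z : ℂ) (v : V) (n : ℤ), (φ z v) n ∈ A n) {v' : Module.Dual ℂ V} {t : Finset ℤ}
    (ht : ∀ d ∉ t, ∀ x ∈ A d, v' x = 0) (z : ℂ) (u : V) (i : ℕ) :
    pairF v' ((shiftOp L)^[i] (φ z u)) = ∑ n ∈ t, v' ((L ^ i) (φ z u (n - i))) := by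
  refine (pairF_eq_sum ht fun d => ?_).trans (sum_congr rfl fun n _ => by
    rw [shiftOp_iterate_apply])
  rw [shiftOp_iterate_apply]
  simpa using pow_apply_mem_of_mem hL (hφA z u (d - i)) i

/-- `⟨l, L^i φ(ζ) L^j u⟩` in degree `n`: the degree-`n` component of `L^i φ(ζ) L^j u` is `L^i`
applied to the degree-`(n - i)` component of `φ(ζ) L^j u`. -/
def matrixCoeff (φ : ℂ → V →ₗ[ℂ] (ℤ → V)) (L : V →ₗ[ℂ] V) (l : Module.Dual ℂ V) (u : V)
    (n : ℤ) (i j : ℕ) (ζ : ℂ) : ℂ :=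
  l ((L ^ i) (φ ζ ((L ^ j) u) (n - i)))

theorem matrixCoeff_euler {w : ℤ}
    (hL0 : ∀ (m : ℤ) (v : V), v ∈ A m → ∀ (d : ℤ) (l : Module.Dual ℂ V) (z : ℂ), z ≠ 0 →
      ∃ d' : ℂ, HasDerivAt (fun z => l ((φ z v) d)) d' z ∧
        ((d : ℂ) - (m : ℂ)) * l ((φ z v) d) = z * d' + (w : ℂ) * l ((φ z v) d))
    (hL : ∀ (n : ℤ) (v : V), v ∈ A n → L v ∈ A (n + 1)) {u : V} {m : ℤ} (hu : u ∈ A m)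
    (l : Module.Dual ℂ V) (n : ℤ) (i j : ℕ) {ζ : ℂ} (hζ : ζ ≠ 0) :
    ∃ d, HasDerivAt (matrixCoeff φ L l u n i j) d ζ ∧
      ζ * d = ((n - m - w - i - j : ℤ) : ℂ) * matrixCoeff φ L l u n i j ζ := by
  obtain ⟨d, hd, heq⟩ :=
    hL0 _ _ (pow_apply_mem_of_mem hL hu j) (n - i) (l.comp (L ^ i)) ζ hζ
  refine ⟨d, hd, ?_⟩
  simp only [LinearMap.comp_apply] at heq
  simp only [matrixCoeff]
  push_cast at heq ⊢
  linear_combination -heq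

theorem hasDerivAt_matrixCoeff
    (hL : ∀ (v : V) (d : ℤ) (l : Module.Dual ℂ V) (z : ℂ), z ≠ 0 →
      HasDerivAt (fun z => l ((φ z v) d)) (l (L ((φ z v) (d - 1)) - (φ z (L v)) d)) z)
    (l : Module.Dual ℂ V) (u : V) (n : ℤ) (i j : ℕ) {z : ℂ} (hz : z ≠ 0) :
    HasDerivAt (matrixCoeff φ L l u n i j)
      (matrixCoeff φ L l u n (i + 1) j z - matrixCoeff φ L l u n i (j + 1) z) z := by
  refine (hL ((L ^ j) u) (n - i) (l.comp (L ^ i)) z hz).congr_deriv ?_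
  simp only [matrixCoeff, LinearMap.comp_apply, map_sub, Nat.cast_succ, sub_add_eq_sub_sub]
  rw [pow_succ L i, _root_.pow_succ' L j]
  rfl

theorem matrixCoeff_eq_zero {N₀ : ℤ} (hbdd : ∀ n < N₀, A n = ⊥)
    (hφA : ∀ (z : ℂ) (v : V) (n : ℤ), (φ z v) n ∈ A n) (l : Module.Dual ℂ V) (u : V)
    {n : ℤ} {i : ℕ} (hi : n - i < N₀) (j : ℕ) (ζ : ℂ) : matrixCoeff φ L l u n i j ζ = 0 := by
  have h := hφA ζ ((L ^ j) u) (n - i)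
  rw [hbdd _ hi, Submodule.mem_bot] at h
  simp [matrixCoeff, h]

theorem hasAbsSum_matrixCoeff_of_mem {N₀ w : ℤ} (hbdd : ∀ n < N₀, A n = ⊥)
    (hφA : ∀ (z : ℂ) (v : V) (n : ℤ), (φ z v) n ∈ A n)
    (hL0 : ∀ (m : ℤ) (v : V), v ∈ A m → ∀ (d : ℤ) (l : Module.Dual ℂ V) (z : ℂ), z ≠ 0 →
      ∃ d' : ℂ, HasDerivAt (fun z => l ((φ z v) d)) d' z ∧
        ((d : ℂ) - (m : ℂ)) * l ((φ z v) d) = z * d' + (w : ℂ) * l ((φ z v) d))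
    (hLwt : ∀ (n : ℤ) (v : V), v ∈ A n → L v ∈ A (n + 1))
    (hLder : ∀ (v : V) (d : ℤ) (l : Module.Dual ℂ V) (z : ℂ), z ≠ 0 →
      HasDerivAt (fun z => l ((φ z v) d)) (l (L ((φ z v) (d - 1)) - (φ z (L v)) d)) z)
    {a z : ℂ} (hz : z ≠ 0) (haz : ‖a‖ < ‖z‖) {u : V} {m : ℤ} (hu : u ∈ A m)
    (l : Module.Dual ℂ V) (n : ℤ) :
    HasAbsSum (fun ij : ℕ × ℕ => a ^ ij.1 / ij.1.factorial * ((-a) ^ ij.2 / ij.2.factorial) *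
      matrixCoeff φ L l u n ij.1 ij.2 z) (matrixCoeff φ L l u n 0 0 (z + a)) := by
  have hrec : ∀ i j : ℕ,
      (((n - m - w : ℤ) : ℂ) - i - j) * (matrixCoeff φ L l u n i j z * z ^ (i + j)) =
        matrixCoeff φ L l u n (i + 1) j z * z ^ (i + 1 + j) -
          matrixCoeff φ L l u n i (j + 1) z * z ^ (i + (j + 1)) := by
    intro i j
    obtain ⟨d, hd, hzd⟩ := matrixCoeff_euler hL0 hLwt hu l n i j hz
    rw [hd.unique (hasDerivAt_matrixCoeff hLder l u n i j hz)] at hzd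
    push_cast at hzd ⊢
    linear_combination -(z ^ (i + j)) * hzd
  have hvan : ∀ i j : ℕ, (n - N₀).toNat < i → matrixCoeff φ L l u n i j z * z ^ (i + j) = 0 :=
    fun i j hi => by rw [matrixCoeff_eq_zero hbdd hφA l u (by omega) j z, zero_mul]
  have hx : ‖a / z‖ < 1 := by rw [norm_div]; exact (div_lt_one (norm_pos_iff.2 hz)).2 haz
  have hz0 : (0 : ℂ) ∉ Metric.ball z ‖z‖ := by simp
  have hmono := IsOpen.mul_zpow_eq_of_hasDerivAt Metric.isOpen_ball
    (convex_ball z ‖z‖).isPreconnected hz0 (k := n - m - w)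
    (fun ζ hζ => by
      simpa using matrixCoeff_euler hL0 hLwt hu l n 0 0 (ne_of_mem_of_not_mem hζ hz0))
    (Metric.mem_ball_self (norm_pos_iff.2 hz)) (ζ := z + a) (by simpa using haz)
  convert hasAbsSum_of_recursion hrec hvan hx using 1
  · ext ⟨i, j⟩
    simp only [← neg_div, div_pow, pow_add]
    field_simp
  · have hzk : z ^ (n - m - w) ≠ 0 := zpow_ne_zero _ hz
    rw [Complex.cpow_intCast, one_add_div hz, div_zpow, add_zero, pow_zero, mul_one,
      mul_div_assoc', eq_div_iff hzk, hmono]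

theorem matrixCoeff_add (l : Module.Dual ℂ V) (u₁ u₂ : V) (n : ℤ) (i j : ℕ) (ζ : ℂ) :
    matrixCoeff φ L l (u₁ + u₂) n i j ζ =
      matrixCoeff φ L l u₁ n i j ζ + matrixCoeff φ L l u₂ n i j ζ := by
  simp [matrixCoeff]

theorem hasAbsSum_matrixCoeff {N₀ w : ℤ} (hA : ⨆ n, A n = ⊤) (hbdd : ∀ n < N₀, A n = ⊥)
    (hφA : ∀ (z : ℂ) (v : V) (n : ℤ), (φ z v) n ∈ A n)
    (hL0 : ∀ (m : ℤ) (v : V), v ∈ A m → ∀ (d : ℤ) (l : Module.Dual ℂ V) (z : ℂ), z ≠ 0 →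
      ∃ d' : ℂ, HasDerivAt (fun z => l ((φ z v) d)) d' z ∧
        ((d : ℂ) - (m : ℂ)) * l ((φ z v) d) = z * d' + (w : ℂ) * l ((φ z v) d))
    (hLwt : ∀ (n : ℤ) (v : V), v ∈ A n → L v ∈ A (n + 1))
    (hLder : ∀ (v : V) (d : ℤ) (l : Module.Dual ℂ V) (z : ℂ), z ≠ 0 →
      HasDerivAt (fun z => l ((φ z v) d)) (l (L ((φ z v) (d - 1)) - (φ z (L v)) d)) z)
    {a z : ℂ} (hz : z ≠ 0) (haz : ‖a‖ < ‖z‖) (v : V) (l : Module.Dual ℂ V) (n : ℤ) :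
    HasAbsSum (fun ij : ℕ × ℕ => a ^ ij.1 / ij.1.factorial * ((-a) ^ ij.2 / ij.2.factorial) *
      matrixCoeff φ L l v n ij.1 ij.2 z) (matrixCoeff φ L l v n 0 0 (z + a)) := by
  refine Submodule.iSup_induction A (motive := fun v => HasAbsSum
      (fun ij : ℕ × ℕ => a ^ ij.1 / ij.1.factorial * ((-a) ^ ij.2 / ij.2.factorial) *
        matrixCoeff φ L l v n ij.1 ij.2 z) (matrixCoeff φ L l v n 0 0 (z + a)))
    (hA ▸ Submodule.mem_top : v ∈ ⨆ n, A n)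
    (fun m u hu => hasAbsSum_matrixCoeff_of_mem hbdd hφA hL0 hLwt hLder hz haz hu l n) ?_ ?_
  · simpa [matrixCoeff] using hasAbsSum_zero
  · intro u₁ u₂ h₁ h₂
    simpa only [matrixCoeff_add, mul_add] using h₁.add h₂

end Field

theorem stmt6_general
    (V : Type) [AddCommGroup V] [Module ℂ V]
    (A : ℤ → Submodule ℂ V)
    (hInt : DirectSum.IsInternal fun n => A n)
    (N₀ : ℤ) (hbdd : ∀ n < N₀, A n = ⊥)
    (φ : ℂ → V →ₗ[ℂ] (ℤ → V))
    (hφA : ∀ (z : ℂ) (v : V) (n : ℤ), (φ z v) n ∈ A n)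
    (w : ℤ)
    -- L(0)-bracket formula [L(0), φ(z)] = z (d/dz)φ(z) + w φ(z)
    (hL0 : ∀ (m : ℤ) (v : V), v ∈ A m → ∀ (d : ℤ) (l : Module.Dual ℂ V) (z : ℂ), z ≠ 0 →
      ∃ d' : ℂ, HasDerivAt (fun z => l ((φ z v) d)) d' z ∧
        ((d : ℂ) - (m : ℂ)) * l ((φ z v) d) = z * d' + (w : ℂ) * l ((φ z v) d))
    (Lm1 : V →ₗ[ℂ] V)
    (hLm1wt : ∀ (n : ℤ) (v : V), v ∈ A n → Lm1 v ∈ A (n + 1))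
    -- L(-1)-bracket formula [L(-1), φ(z)] = (d/dz) φ(z)
    (hLm1 : ∀ (v : V) (d : ℤ) (l : Module.Dual ℂ V) (z : ℂ), z ≠ 0 →
      HasDerivAt (fun z => l ((φ z v) d))
        (l (Lm1 ((φ z v) (d - 1)) - (φ z (Lm1 v)) d)) z) :
    ∀ (a z : ℂ), z ≠ 0 → ‖a‖ < ‖z‖ →
      ∀ (v : V) (v' : Module.Dual ℂ V), {d : ℤ | ∃ x ∈ A d, v' x ≠ 0}.Finite →
        Summable (fun ij : ℕ × ℕ =>
          ‖(a ^ ij.1 / (ij.1.factorial : ℂ)) * ((-a) ^ ij.2 / (ij.2.factorial : ℂ)) *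
            pairF v' ((shiftOp Lm1)^[ij.1] (φ z ((Lm1 ^ ij.2) v)))‖) ∧
        (∑' ij : ℕ × ℕ,
          (a ^ ij.1 / (ij.1.factorial : ℂ)) * ((-a) ^ ij.2 / (ij.2.factorial : ℂ)) *
            pairF v' ((shiftOp Lm1)^[ij.1] (φ z ((Lm1 ^ ij.2) v))))
          = pairF v' (φ (z + a) v) := by
  intro a z hz haz v v' hS
  set t := hS.toFinset
  have ht : ∀ d ∉ t, ∀ x ∈ A d, v' x = 0 := fun d hd x hx => by
    by_contra h
    exact hd (hS.mem_toFinset.2 ⟨x, hx, h⟩)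
  have hlhs (i j : ℕ) : pairF v' ((shiftOp Lm1)^[i] (φ z ((Lm1 ^ j) v))) =
      ∑ n ∈ t, matrixCoeff φ Lm1 v' v n i j z :=
    pairF_shiftOp_iterate_eq_sum hLm1wt hφA ht z _ i
  have hrhs : pairF v' (φ (z + a) v) = ∑ n ∈ t, matrixCoeff φ Lm1 v' v n 0 0 (z + a) := by
    simpa [matrixCoeff] using pairF_eq_sum ht (hφA (z + a) v)
  have h := hasAbsSum_sum (s := t) fun n _ => hasAbsSum_matrixCoeff
    hInt.submodule_iSup_eq_top hbdd hφA hL0 hLm1wt hLm1 hz haz v v' n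
  simp only [← mul_sum] at h
  simp only [hlhs, hrhs]
  exact ⟨h.1, h.2.tsum_eq⟩

theorem stmt6
    (V : Type) [AddCommGroup V] [Module ℂ V]
    (A : ℤ → Submodule ℂ V)
    (hInt : DirectSum.IsInternal fun n => A n)
    (hfin : ∀ n : ℤ, FiniteDimensional ℂ (A n))
    (N₀ : ℤ) (hbdd : ∀ n < N₀, A n = ⊥)
    (φ : ℂ → V →ₗ[ℂ] (ℤ → V))
    (hφA : ∀ (z : ℂ) (v : V) (n : ℤ), (φ z v) n ∈ A n)
    (w : ℤ)
    -- L(0)-bracket formula [L(0), φ(z)] = z (d/dz)φ(z) + w φ(z)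
    (hL0 : ∀ (m : ℤ) (v : V), v ∈ A m → ∀ (d : ℤ) (l : Module.Dual ℂ V) (z : ℂ), z ≠ 0 →
      ∃ d' : ℂ, HasDerivAt (fun z => l ((φ z v) d)) d' z ∧
        ((d : ℂ) - (m : ℂ)) * l ((φ z v) d) = z * d' + (w : ℂ) * l ((φ z v) d))
    (Lm1 : V →ₗ[ℂ] V)
    (hLm1wt : ∀ (n : ℤ) (v : V), v ∈ A n → Lm1 v ∈ A (n + 1))
    -- L(-1)-bracket formula [L(-1), φ(z)] = (d/dz) φ(z)
    (hLm1 : ∀ (v : V) (d : ℤ) (l : Module.Dual ℂ V) (z : ℂ), z ≠ 0 →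
      HasDerivAt (fun z => l ((φ z v) d))
        (l (Lm1 ((φ z v) (d - 1)) - (φ z (Lm1 v)) d)) z) :
    ∀ (a z : ℂ), z ≠ 0 → ‖a‖ < ‖z‖ →
      ∀ (v : V) (v' : Module.Dual ℂ V), {d : ℤ | ∃ x ∈ A d, v' x ≠ 0}.Finite →
        Summable (fun ij : ℕ × ℕ =>
          ‖(a ^ ij.1 / (ij.1.factorial : ℂ)) * ((-a) ^ ij.2 / (ij.2.factorial : ℂ)) *
            pairF v' ((shiftOp Lm1)^[ij.1] (φ z ((Lm1 ^ ij.2) v)))‖) ∧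
        (∑' ij : ℕ × ℕ,
          (a ^ ij.1 / (ij.1.factorial : ℂ)) * ((-a) ^ ij.2 / (ij.2.factorial : ℂ)) *
            pairF v' ((shiftOp Lm1)^[ij.1] (φ z ((Lm1 ^ ij.2) v))))
          = pairF v' (φ (z + a) v) :=
  stmt6_general V A hInt N₀ hbdd φ hφA w hL0 Lm1 hLm1wt hLm1
end

section
/- Let V be a graded vector space, φ^i generating fields satisfying Conditions 1–6, and Y_V the vertex operator map of the first construction. Then for all a ∈ ℂ^×, v ∈ V, v' ∈ V', and a homogeneous element u = φ^{i₁}_{n₁}⋯φ^{i_k}_{n_k}1: ⟨v', a^{L(0)} Y_V(u, z) a^{-L(0)} v⟩ = ⟨v', Y_V(a^{L(0)}u, az) v⟩, i.e., the L(0)-conjugation formula holds for Y_V. -/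
/- STATEMENT 10: the L(0)-conjugation formula
⟨v', a^{L(0)} Y_V(u, z) a^{-L(0)} v⟩ = ⟨v', Y_V(a^{L(0)}u, az) v⟩
for the vertex operator map of the first construction, where
u = φ^{i₁}_{n₁}⋯φ^{i_k}_{n_k}1 is homogeneous of weight
wt u = Σ_j (wt φ^{i_j} - n_j - 1), a^{L(0)} acts as a^n on the degree-n
subspace, and v, v' are homogeneous.  Setup as in Statements 7–9. -/

open Finset Complex

def RatWithDiagPoles (m : ℕ) (R : (Fin m → ℂ) → ℂ) : Prop :=
  ∃ (P : MvPolynomial (Fin m) ℂ) (r : Fin m → ℕ) (s : Fin m → Fin m → ℕ),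
    ∀ x : Fin m → ℂ,
      R x = MvPolynomial.eval x P /
        ((∏ i, x i ^ r i) *
          ∏ pq ∈ Finset.univ.filter (fun pq : Fin m × Fin m => pq.1 < pq.2),
            (x pq.1 - x pq.2) ^ s pq.1 pq.2)

noncomputable def iterRes : (k : ℕ) → ((Fin k → ℂ) → ℂ) → (Fin k → ℝ) → ℂ
  | 0, f, _ => f (fun i => i.elim0)
  | (k + 1), f, r =>
      (2 * Real.pi * Complex.I)⁻¹ *
        (∮ w in C(0, r 0), iterRes k (fun ξ => f (Fin.cons w ξ)) (fun i => r i.succ))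

noncomputable def pairQ {V : Type} [AddCommGroup V] [Module ℂ V]
    (v' : Module.Dual ℂ V) (w : ℚ → V) : ℂ := ∑' h : ℚ, v' (w h)

def GradedDualQ {V : Type} [AddCommGroup V] [Module ℂ V]
    (A : ℚ → Submodule ℂ V) (v' : Module.Dual ℂ V) : Prop :=
  {h : ℚ | ∃ x ∈ A h, v' x ≠ 0}.Finite

section Setup

variable {V : Type} [AddCommGroup V] [Module ℂ V] {I : Type}

def monApply (c : I → ℤ → V →ₗ[ℂ] V) (L : List (I × ℤ)) (v : V) : V :=
  L.foldr (fun p w => c p.1 p.2 w) v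

def MatchesR (c : I → ℤ → V →ₗ[ℂ] V) (v' : Module.Dual ℂ V) (v : V)
    {k : ℕ} (is : Fin k → I) (F : (Fin k → ℂ) → ℂ) : Prop :=
  RatWithDiagPoles k F ∧
    ∀ z : Fin k → ℂ, (∀ a b : Fin k, a < b → ‖z b‖ < ‖z a‖) → (∀ a, z a ≠ 0) →
      Summable (fun n : Fin k → ℤ =>
        ‖v' (monApply c (List.ofFn fun j => (is j, n j)) v) *
          ∏ j : Fin k, z j ^ (-(n j) - 1 : ℤ)‖) ∧
      (∑' n : Fin k → ℤ,
        v' (monApply c (List.ofFn fun j => (is j, n j)) v) *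
          ∏ j : Fin k, z j ^ (-(n j) - 1 : ℤ)) = F z

end Setup


/-! Only monomials of total degree `d - m - wt u` pair nontrivially with homogeneous `v'` and
`v`, so the rational function `F` summing these pairings satisfies
`F (a • x) = a ^ (d - m - wt u) * F x` on the domain of convergence, and then everywhere by the
identity theorem applied to its numerator (the denominator is homogeneous). The substitution
`ξ = a • η` in the iterated residue defining `Y (a * z)` then yields the conjugation formula. -/

open Filter Topology

theorem circleMap_add_arg (b : ℂ) (r θ : ℝ) :
    circleMap 0 (‖b‖ * r) (θ + arg b) = b * circleMap 0 r θ := by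
  simp only [circleMap, zero_add]
  conv_rhs => rw [← norm_mul_exp_arg_mul_I b]
  push_cast
  rw [add_mul, Complex.exp_add]
  ring

theorem circleIntegral_comp_mul_left (f : ℂ → ℂ) {b : ℂ} (hb : b ≠ 0) (r : ℝ) :
    (∮ w in C(0, r), f (b * w)) = b⁻¹ * ∮ w in C(0, ‖b‖ * r), f w := by
  set g : ℝ → ℂ := fun θ => deriv (circleMap 0 (‖b‖ * r)) θ • f (circleMap 0 (‖b‖ * r) θ)
  have hg : Function.Periodic g (2 * Real.pi) := fun θ => by
    simp only [g, deriv_circleMap, periodic_circleMap _ _ θ]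
  calc (∮ w in C(0, r), f (b * w))
      = ∫ θ in (0 : ℝ)..2 * Real.pi, b⁻¹ * g (θ + arg b) := by
        simp only [circleIntegral, g, deriv_circleMap, smul_eq_mul, circleMap_add_arg]
        congr 1 with θ
        field_simp
    _ = b⁻¹ * ∮ w in C(0, ‖b‖ * r), f w := by
        rw [intervalIntegral.integral_const_mul, intervalIntegral.integral_comp_add_right g,
          zero_add, add_comm _ (arg b), hg.intervalIntegral_add_eq (arg b) 0, zero_add,
          circleIntegral]

theorem iterRes_const_mul (a : ℂ) :
    ∀ (k : ℕ) (f : (Fin k → ℂ) → ℂ) (rr : Fin k → ℝ),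
      iterRes k (fun ξ => a * f ξ) rr = a * iterRes k f rr
  | 0, _, _ => rfl
  | k + 1, f, rr => by
    simp only [iterRes, iterRes_const_mul a k, circleIntegral.integral_const_mul]
    ring

theorem iterRes_comp_smul {b : ℂ} (hb : b ≠ 0) :
    ∀ (k : ℕ) (f : (Fin k → ℂ) → ℂ) (rr : Fin k → ℝ),
      iterRes k (fun ξ => f (b • ξ)) rr = b⁻¹ ^ k * iterRes k f (‖b‖ • rr)
  | 0, f, rr => by
    simp only [iterRes, pow_zero, one_mul]
    congr 1
    exact funext fun j => j.elim0
  | k + 1, f, rr => by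
    have hcons (w : ℂ) (ξ : Fin k → ℂ) :
        b • (Fin.cons w ξ : Fin (k + 1) → ℂ) = Fin.cons (b * w) (b • ξ) := by
      ext j
      cases j using Fin.cases <;> simp
    have hinner (w : ℂ) := iterRes_comp_smul hb k (fun η => f (Fin.cons (b * w) η))
      (fun i => rr i.succ)
    simp only [iterRes, hcons, hinner, circleIntegral.integral_const_mul]
    rw [circleIntegral_comp_mul_left (fun w => iterRes k (fun η => f (Fin.cons w η))
      (‖b‖ • fun i => rr i.succ)) hb (rr 0)]
    simp only [Pi.smul_def, smul_eq_mul, pow_succ]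
    ring

section DiagPoles

variable {k : ℕ}

def diagDenom (r : Fin k → ℕ) (s : Fin k → Fin k → ℕ) (x : Fin k → ℂ) : ℂ :=
  (∏ i, x i ^ r i) *
    ∏ pq ∈ univ.filter (fun pq : Fin k × Fin k => pq.1 < pq.2), (x pq.1 - x pq.2) ^ s pq.1 pq.2

theorem exists_diagDenom_smul (r : Fin k → ℕ) (s : Fin k → Fin k → ℕ) :
    ∃ N : ℕ, ∀ (a : ℂ) (x : Fin k → ℂ), diagDenom r s (a • x) = a ^ N * diagDenom r s x := by
  refine ⟨∑ i, r i + ∑ pq ∈ univ.filter (fun pq : Fin k × Fin k => pq.1 < pq.2), s pq.1 pq.2,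
    fun a x => ?_⟩
  simp only [diagDenom, Pi.smul_apply, smul_eq_mul, ← mul_sub, mul_pow, prod_mul_distrib,
    prod_pow_eq_pow_sum, pow_add]
  ring

theorem diagDenom_ne_zero (r : Fin k → ℕ) (s : Fin k → Fin k → ℕ) {x : Fin k → ℂ}
    (hx : ∀ i, x i ≠ 0) (hinj : Function.Injective x) : diagDenom r s x ≠ 0 :=
  mul_ne_zero (prod_ne_zero_iff.2 fun i _ => pow_ne_zero _ (hx i))
    (prod_ne_zero_iff.2 fun _ hpq => pow_ne_zero _ <|
      sub_ne_zero.2 <| hinj.ne (mem_filter.1 hpq).2.ne)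

theorem continuous_diagDenom (r : Fin k → ℕ) (s : Fin k → Fin k → ℕ) :
    Continuous (diagDenom r s) := by
  unfold diagDenom
  fun_prop

theorem RatWithDiagPoles.apply_smul_of_eventually {F : (Fin k → ℂ) → ℂ}
    (hF : RatWithDiagPoles k F) {a μ : ℂ} (ha : a ≠ 0) {x₀ : Fin k → ℂ} (hx₀ : ∀ i, x₀ i ≠ 0)
    (hinj : Function.Injective x₀) (h : ∀ᶠ x in 𝓝 x₀, F (a • x) = μ * F x) (x : Fin k → ℂ) :
    F (a • x) = μ * F x := by
  obtain ⟨P, r, s, hPD⟩ := hF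
  replace hPD : ∀ x, F x = MvPolynomial.eval x P / diagDenom r s x := hPD
  obtain ⟨N, hN⟩ := exists_diagDenom_smul r s
  have haN : a ^ N ≠ 0 := pow_ne_zero N ha
  have hD : ∀ᶠ x in 𝓝 x₀, diagDenom r s x ≠ 0 :=
    (continuous_diagDenom r s).continuousAt.eventually_ne (diagDenom_ne_zero r s hx₀ hinj)
  have hnum_near : (fun x => MvPolynomial.eval (a • x) P) =ᶠ[𝓝 x₀]
      fun x => μ * a ^ N * MvPolynomial.eval x P := by
    filter_upwards [h, hD] with x hx hDx
    rw [hPD, hPD, hN] at hx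
    field_simp at hx
    linear_combination hx
  have hlhs : AnalyticOnNhd ℂ (fun x : Fin k → ℂ => MvPolynomial.eval (a • x) P) Set.univ :=
    AnalyticOnNhd.eval_continuousLinearMap (a • ContinuousLinearMap.id ℂ (Fin k → ℂ)) P
  have hrhs : AnalyticOnNhd ℂ (fun x : Fin k → ℂ => μ * a ^ N * MvPolynomial.eval x P) Set.univ :=
    fun x hx => analyticAt_const.mul (AnalyticOnNhd.eval_mvPolynomial P x hx)
  have hnum := AnalyticOnNhd.eq_of_eventuallyEq hlhs hrhs hnum_near
  rw [hPD, hPD, hN, congrFun hnum x, mul_assoc, mul_div_assoc, mul_div_mul_left _ _ haN]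

end DiagPoles

theorem Finset.prod_zpow_eq_zpow_sum {ι G₀ : Type*} [CommGroupWithZero G₀] (s : Finset ι)
    {a : G₀} (ha : a ≠ 0) (e : ι → ℤ) :
    ∏ j ∈ s, a ^ e j = a ^ ∑ j ∈ s, e j := by
  classical
  induction s using Finset.induction with
  | empty => simp
  | insert _ _ h ih => rw [prod_insert h, sum_insert h, ih, ← zpow_add₀ ha]

theorem exists_pos_strictAnti_lt (k : ℕ) {δ : ℝ} (hδ : 0 < δ) :
    ∃ rr : Fin k → ℝ, (∀ j, 0 < rr j) ∧ StrictAnti rr ∧ ∀ j, rr j < δ := by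
  refine ⟨fun j => δ / (j + 2), fun j => by positivity, fun p q hpq => ?_, fun j => ?_⟩
  · have : (p : ℝ) < q := by exact_mod_cast hpq
    exact div_lt_div_of_pos_left hδ (by positivity) (by linarith)
  · exact div_lt_self hδ (by linarith [(j.val.cast_nonneg : (0 : ℝ) ≤ j)])

theorem eventually_nhds_strictAnti_norm {k : ℕ} {x₀ : Fin k → ℂ} (hx₀ : StrictAnti (‖x₀ ·‖))
    (hx₀0 : ∀ j, x₀ j ≠ 0) : ∀ᶠ x in 𝓝 x₀, StrictAnti (‖x ·‖) ∧ ∀ j, x j ≠ 0 := by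
  have hcont (j : Fin k) : Continuous fun x : Fin k → ℂ => ‖x j‖ := by fun_prop
  refine (eventually_all.2 fun p => eventually_all.2 fun q => ?_).and
    (eventually_all.2 fun j => (continuous_apply j).continuousAt.eventually_ne (hx₀0 j))
  exact eventually_imp_distrib_left.2 fun hpq =>
    (hcont q).continuousAt.eventually_lt (hcont p).continuousAt (hx₀ hpq)

section Monomials

variable {V : Type} [AddCommGroup V] [Module ℂ V] {I : Type} {c : I → ℤ → V →ₗ[ℂ] V}
  {v' : Module.Dual ℂ V} {v : V} {k : ℕ} {is : Fin k → I} {F : (Fin k → ℂ) → ℂ}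

theorem MatchesR.apply_smul_of_strictAnti (hF : MatchesR c v' v is F) {a μ : ℂ} (ha : a ≠ 0)
    (hcoeff : ∀ n : Fin k → ℤ, v' (monApply c (List.ofFn fun j => (is j, n j)) v) ≠ 0 →
      a ^ (∑ j, (-(n j) - 1)) = μ)
    {x : Fin k → ℂ} (hx : StrictAnti (‖x ·‖)) (hx0 : ∀ j, x j ≠ 0) :
    F (a • x) = μ * F x := by
  have hax : StrictAnti (‖(a • x) ·‖) := fun p q hpq => by
    simpa only [Pi.smul_apply, smul_eq_mul, norm_mul] using
      mul_lt_mul_of_pos_left (hx hpq) (norm_pos_iff.2 ha)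
  have hax0 (j : Fin k) : (a • x) j ≠ 0 := mul_ne_zero ha (hx0 j)
  rw [← (hF.2 _ hax hax0).2, ← (hF.2 x hx hx0).2, ← tsum_mul_left]
  refine tsum_congr fun n => ?_
  by_cases hn : v' (monApply c (List.ofFn fun j => (is j, n j)) v) = 0
  · simp [hn]
  rw [← hcoeff n hn]
  simp only [Pi.smul_apply, smul_eq_mul, mul_zpow, prod_mul_distrib,
    prod_zpow_eq_zpow_sum _ ha]
  ring

theorem MatchesR.apply_smul (hF : MatchesR c v' v is F) {a μ : ℂ} (ha : a ≠ 0)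
    (hcoeff : ∀ n : Fin k → ℤ, v' (monApply c (List.ofFn fun j => (is j, n j)) v) ≠ 0 →
      a ^ (∑ j, (-(n j) - 1)) = μ)
    (x : Fin k → ℂ) : F (a • x) = μ * F x := by
  obtain ⟨rr, hpos, hanti, -⟩ := exists_pos_strictAnti_lt k one_pos
  have hx₀ : StrictAnti fun j => ‖(rr j : ℂ)‖ := by simpa [abs_of_pos (hpos _)] using hanti
  have hx₀0 (j : Fin k) : (rr j : ℂ) ≠ 0 := ofReal_ne_zero.2 (hpos j).ne'
  exact hF.1.apply_smul_of_eventually ha hx₀0 (ofReal_injective.comp hanti.injective)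
    ((eventually_nhds_strictAnti_norm hx₀ hx₀0).mono fun y hy =>
      hF.apply_smul_of_strictAnti ha hcoeff hy.1 hy.2) x

end Monomials

section Grading

variable {V : Type} [AddCommGroup V] [Module ℂ V] {I : Type} {A : ℚ → Submodule ℂ V}
  {wt : I → ℤ} {c : I → ℤ → V →ₗ[ℂ] V}

theorem GradedDualQ.of_homogeneous {v' : Module.Dual ℂ V} {d : ℚ}
    (hv' : ∀ e : ℚ, e ≠ d → ∀ x ∈ A e, v' x = 0) : GradedDualQ A v' :=
  (Set.finite_singleton d).subset fun e ⟨x, hx, hvx⟩ => by_contra fun hne => hvx (hv' e hne x hx)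

theorem monApply_mem
    (hcwt : ∀ (i : I) (n : ℤ) (m : ℚ) (v : V), v ∈ A m → c i n v ∈ A (m + (wt i : ℚ) - n - 1))
    (L : List (I × ℤ)) {m : ℚ} {v : V} (hv : v ∈ A m) :
    monApply c L v ∈ A (m + (L.map fun p => (wt p.1 : ℚ) - p.2 - 1).sum) := by
  induction L with
  | nil => simpa [monApply] using hv
  | cons p L ih =>
    have h := hcwt p.1 p.2 _ _ ih
    rw [show m + (L.map fun p => (wt p.1 : ℚ) - p.2 - 1).sum + wt p.1 - p.2 - 1
      = m + ((p :: L).map fun p => (wt p.1 : ℚ) - p.2 - 1).sum by simp; ring] at h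
    exact h

theorem weight_eq_of_apply_monApply_ne_zero
    (hcwt : ∀ (i : I) (n : ℤ) (m : ℚ) (v : V), v ∈ A m → c i n v ∈ A (m + (wt i : ℚ) - n - 1))
    {v' : Module.Dual ℂ V} {d : ℚ} (hv' : ∀ e : ℚ, e ≠ d → ∀ x ∈ A e, v' x = 0)
    {m : ℚ} {v : V} (hv : v ∈ A m) {k : ℕ} (is : Fin k → I) (n : Fin k → ℤ)
    (hn : v' (monApply c (List.ofFn fun j => (is j, n j)) v) ≠ 0) :
    m + ((∑ j, wt (is j) : ℤ) + (∑ j, (-(n j) - 1) : ℤ)) = d := by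
  by_contra hne
  refine hn (hv' _ ?_ _ (monApply_mem hcwt _ hv))
  simpa [List.sum_ofFn, sum_add_distrib, sub_eq_add_neg, add_assoc] using hne

end Grading

theorem zpow_eq_cpow_mul_inv {a : ℂ} (ha : a ≠ 0) {d m : ℚ} {w e : ℤ} (h : m + (w + e) = d) :
    a ^ e = a ^ (d : ℂ) * (a ^ (m : ℂ))⁻¹ * (a ^ w)⁻¹ := by
  rw [← cpow_intCast, ← cpow_intCast, ← cpow_neg, ← cpow_neg, ← cpow_add _ _ ha,
    ← cpow_add _ _ ha, ← h]
  congr 1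
  push_cast
  ring

theorem apply_mul_eq_of_iterRes {k : ℕ} (ms : Fin k → ℤ) {F : (Fin k → ℂ) → ℂ} {a μ : ℂ}
    (ha : a ≠ 0) (hF : ∀ x, F (a • x) = μ * F x) {R : ℂ → ℂ}
    (hR : ∀ z : ℂ, z ≠ 0 → ∃ ρ > (0 : ℝ), ∀ rr : Fin k → ℝ, (∀ j, 0 < rr j) → StrictAnti rr →
      (∀ j, rr j < ρ) → R z = iterRes k (fun ξ => (∏ j, ξ j ^ ms j) * F (fun j => ξ j + z)) rr)
    {z : ℂ} (hz : z ≠ 0) :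
    R (a * z) = a ^ (∑ j, ms j) * μ * a ^ k * R z := by
  obtain ⟨ρ₁, hρ₁, hR₁⟩ := hR z hz
  obtain ⟨ρ₂, hρ₂, hR₂⟩ := hR (a * z) (mul_ne_zero ha hz)
  have hna : 0 < ‖a‖ := norm_pos_iff.2 ha
  -- `rr` is admissible at `a * z`, and `‖a⁻¹‖ • rr` at `z`.
  obtain ⟨rr, hpos, hanti, hlt⟩ :=
    exists_pos_strictAnti_lt k (lt_min (mul_pos hna hρ₁) hρ₂)
  have hpoint (ξ : Fin k → ℂ) : (∏ j, ξ j ^ ms j) * F (fun j => ξ j + a * z) =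
      a ^ (∑ j, ms j) * μ * ((∏ j, (a⁻¹ • ξ) j ^ ms j) * F (fun j => (a⁻¹ • ξ) j + z)) := by
    have hprod : ∏ j, (a⁻¹ • ξ) j ^ ms j = (a ^ ∑ j, ms j)⁻¹ * ∏ j, ξ j ^ ms j := by
      simp only [Pi.smul_apply, smul_eq_mul, mul_zpow, prod_mul_distrib, inv_zpow,
        prod_inv_distrib, prod_zpow_eq_zpow_sum _ ha]
    have hshift : (fun j => ξ j + a * z) = a • fun j => (a⁻¹ • ξ) j + z := by
      ext j
      simp [mul_add, mul_inv_cancel_left₀ ha]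
    rw [hprod, hshift, hF]
    field_simp
  have hrescale := iterRes_comp_smul (inv_ne_zero ha) k
    (fun η => (∏ j, η j ^ ms j) * F (fun j => η j + z)) rr
  beta_reduce at hrescale
  rw [hR₂ rr hpos hanti fun j => (hlt j).trans_le (min_le_right _ _), funext hpoint,
    iterRes_const_mul, hrescale, inv_inv,
    hR₁ (‖a⁻¹‖ • rr) (fun j => mul_pos (norm_pos_iff.2 (inv_ne_zero ha)) (hpos j))
      (hanti.const_mul (norm_pos_iff.2 (inv_ne_zero ha)))]
  · ring
  · intro j
    have := (hlt j).trans_le (min_le_left _ _)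
    simp only [Pi.smul_apply, smul_eq_mul, norm_inv]
    rwa [inv_mul_lt_iff₀ hna]

theorem stmt10_general
    (V : Type) [AddCommGroup V] [Module ℂ V]
    (A : ℚ → Submodule ℂ V)
    (I : Type)
    (wt : I → ℤ)
    (vac : V)
    (c : I → ℤ → V →ₗ[ℂ] V)
    (hcwt : ∀ (i : I) (n : ℤ) (m : ℚ) (v : V), v ∈ A m →
      c i n v ∈ A (m + (wt i : ℚ) - n - 1))
    (hrat : ∀ (v' : Module.Dual ℂ V), GradedDualQ A v' →
      ∀ (v : V) (k : ℕ) (is : Fin k → I), ∃ F, MatchesR c v' v is F)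
    -- Y is the vertex operator map of the first construction, given by the
    -- iterated residue formula (3.7)
    (Y : ℂ → V →ₗ[ℂ] V →ₗ[ℂ] (ℚ → V))
    (hYdef : ∀ (v' : Module.Dual ℂ V), GradedDualQ A v' →
      ∀ (v : V) (k : ℕ) (is : Fin k → I) (ms : Fin k → ℤ)
        (F : (Fin k → ℂ) → ℂ), MatchesR c v' v is F →
        ∀ z : ℂ, z ≠ 0 →
          ∃ ρ > (0 : ℝ), ∀ rr : Fin k → ℝ,
            (∀ j, 0 < rr j) → (∀ a b : Fin k, a < b → rr b < rr a) →
            (∀ j, rr j < ρ) →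
            pairQ v' (Y z (monApply c (List.ofFn fun j => (is j, ms j)) vac) v)
              = iterRes k (fun ξ => (∏ j : Fin k, ξ j ^ (ms j)) *
                  F (fun j => ξ j + z)) rr) :
    -- L(0)-conjugation formula for Y
    ∀ (a z : ℂ), a ≠ 0 → z ≠ 0 →
      ∀ (v' : Module.Dual ℂ V) (d : ℚ),
        (∀ e : ℚ, e ≠ d → ∀ x ∈ A e, v' x = 0) →
        ∀ (m : ℚ) (v : V), v ∈ A m →
          ∀ (k : ℕ) (is : Fin k → I) (ms : Fin k → ℤ),
            (a ^ (d : ℂ)) * (a ^ (m : ℂ))⁻¹ *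
              pairQ v' (Y z (monApply c (List.ofFn fun j => (is j, ms j)) vac) v)
            = (a ^ (∑ j : Fin k, (wt (is j) - ms j - 1)) ) *
              pairQ v' (Y (a * z) (monApply c (List.ofFn fun j => (is j, ms j)) vac) v) := by
  intro a z ha hz v' d hv' m v hv k is ms
  have hgd : GradedDualQ A v' := .of_homogeneous hv'
  obtain ⟨F, hF⟩ := hrat v' hgd v k is
  have hhom : ∀ x, F (a • x) = a ^ (d : ℂ) * (a ^ (m : ℂ))⁻¹ * (a ^ ∑ j, wt (is j))⁻¹ * F x :=
    hF.apply_smul ha fun n hn =>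
      zpow_eq_cpow_mul_inv ha (weight_eq_of_apply_monApply_ne_zero hcwt hv' hv is n hn)
  have hweight :
      a ^ (∑ j, (wt (is j) - ms j - 1)) * a ^ (∑ j, ms j) * a ^ k = a ^ ∑ j, wt (is j) := by
    rw [← zpow_natCast, ← zpow_add₀ ha, ← zpow_add₀ ha]
    congr 1
    simp only [sum_sub_distrib, sum_const, card_univ, Fintype.card_fin, nsmul_eq_mul, mul_one]
    ring
  rw [apply_mul_eq_of_iterRes ms ha hhom (hYdef v' hgd v k is ms F hF) hz]
  calc
    _ = a ^ (d : ℂ) * (a ^ (m : ℂ))⁻¹ * (a ^ (∑ j, wt (is j)) * (a ^ ∑ j, wt (is j))⁻¹) *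
        pairQ v' (Y z (monApply c (List.ofFn fun j => (is j, ms j)) vac) v) := by
      rw [mul_inv_cancel₀ (zpow_ne_zero _ ha), mul_one]
    _ = _ := by
      rw [← hweight]
      ring

theorem stmt10
    (V : Type) [AddCommGroup V] [Module ℂ V]
    (A : ℚ → Submodule ℂ V)
    (hInt : DirectSum.IsInternal fun n => A n)
    (hfin : ∀ n : ℚ, FiniteDimensional ℂ (A n))
    (N₀ : ℚ) (hbdd : ∀ n < N₀, A n = ⊥)
    (hhalf : ∀ n : ℚ, A n ≠ ⊥ → ((2 : ℚ) * n).den = 1)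
    (I : Type)
    (φ : I → ℂ → V →ₗ[ℂ] (ℚ → V))
    (hφA : ∀ (i : I) (z : ℂ) (v : V) (n : ℚ), (φ i z v) n ∈ A n)
    (wt : I → ℤ) (par : I → ℕ) (hpar : ∀ i, par i ≤ 1)
    (vac : V) (hvac : vac ∈ A 0)
    (c : I → ℤ → V →ₗ[ℂ] V)
    (hcwt : ∀ (i : I) (n : ℤ) (m : ℚ) (v : V), v ∈ A m →
      c i n v ∈ A (m + (wt i : ℚ) - n - 1))
    (hcoeff : ∀ (i : I) (z : ℂ), z ≠ 0 → ∀ (m : ℚ) (v : V), v ∈ A m → ∀ n : ℤ,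
      (φ i z v) ((wt i : ℚ) - (n : ℚ) - 1 + m) = (z ^ (-n - 1 : ℤ)) • c i n v)
    (hsupp : ∀ (i : I) (z : ℂ), z ≠ 0 → ∀ (m : ℚ) (v : V), v ∈ A m → ∀ d : ℚ,
      (∀ n : ℤ, d ≠ (wt i : ℚ) - (n : ℚ) - 1 + m) → (φ i z v) d = 0)
    (Lm1 : V →ₗ[ℂ] V) (hLm1vac : Lm1 vac = 0)
    (hbrc : ∀ (i : I) (n : ℤ) (v : V),
      Lm1 (c i n v) - c i n (Lm1 v) = (-(n : ℂ)) • c i (n - 1) v)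
    (hcre : ∀ (i : I) (n : ℤ), 0 ≤ n → c i n vac = 0)
    (hparity : ∀ i : I, (par i = 0 ↔ ((wt i : ℚ)).den = 1))
    (hspan : Submodule.span ℂ
      {x : V | ∃ L : List (I × ℤ), x = monApply c L vac} = ⊤)
    (hrat : ∀ (v' : Module.Dual ℂ V), GradedDualQ A v' →
      ∀ (v : V) (k : ℕ) (is : Fin k → I), ∃ F, MatchesR c v' v is F)
    (hcomm : ∀ (v' : Module.Dual ℂ V), GradedDualQ A v' →
      ∀ (v : V) (i₁ i₂ : I) (F₁ F₂ : (Fin 2 → ℂ) → ℂ),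
        MatchesR c v' v ![i₁, i₂] F₁ → MatchesR c v' v ![i₂, i₁] F₂ →
        ∀ z₁ z₂ : ℂ, z₁ ≠ 0 → z₂ ≠ 0 → z₁ ≠ z₂ →
          F₁ ![z₁, z₂] = ((-1 : ℂ) ^ (par i₁ * par i₂)) • F₂ ![z₂, z₁])
    -- Y is the vertex operator map of the first construction, given by the
    -- iterated residue formula (3.7)
    (Y : ℂ → V →ₗ[ℂ] V →ₗ[ℂ] (ℚ → V))
    (hYdef : ∀ (v' : Module.Dual ℂ V), GradedDualQ A v' →
      ∀ (v : V) (k : ℕ) (is : Fin k → I) (ms : Fin k → ℤ)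
        (F : (Fin k → ℂ) → ℂ), MatchesR c v' v is F →
        ∀ z : ℂ, z ≠ 0 →
          ∃ ρ > (0 : ℝ), ∀ rr : Fin k → ℝ,
            (∀ j, 0 < rr j) → (∀ a b : Fin k, a < b → rr b < rr a) →
            (∀ j, rr j < ρ) →
            pairQ v' (Y z (monApply c (List.ofFn fun j => (is j, ms j)) vac) v)
              = iterRes k (fun ξ => (∏ j : Fin k, ξ j ^ (ms j)) *
                  F (fun j => ξ j + z)) rr) :
    -- L(0)-conjugation formula for Y
    ∀ (a z : ℂ), a ≠ 0 → z ≠ 0 →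
      ∀ (v' : Module.Dual ℂ V) (d : ℚ),
        (∀ e : ℚ, e ≠ d → ∀ x ∈ A e, v' x = 0) →
        ∀ (m : ℚ) (v : V), v ∈ A m →
          ∀ (k : ℕ) (is : Fin k → I) (ms : Fin k → ℤ),
            (a ^ (d : ℂ)) * (a ^ (m : ℂ))⁻¹ *
              pairQ v' (Y z (monApply c (List.ofFn fun j => (is j, ms j)) vac) v)
            = (a ^ (∑ j : Fin k, (wt (is j) - ms j - 1)) ) *
              pairQ v' (Y (a * z) (monApply c (List.ofFn fun j => (is j, ms j)) vac) v) :=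
  stmt10_general V A I wt vac c hcwt hrat Y hYdef
end

section
/- Let V be a quasi-vertex operator algebra with nondegenerate symmetric invariant bilinear form (·,·)_V, W a V-module graded by ℤ or ℤ+½ with nondegenerate symmetric invariant bilinear form (·,·)_W. Define Y_{WV}^W(w,z)v = e^{zL_W(-1)} Y_W(v,-z) w and define Y_{WW}^V by (v, Y_{WW}^V(w₁,z)w₂)_V = (Y_{WV}^W(e^{zL_W(1)} e^{πiL_W(0)} z^{-2L_W(0)} w₁, z^{-1}) v, w₂)_W. Then the inverse relation holds: (w₂, Y_{WV}^W(w₁,z)v)_W = (Y_{WW}^V(z^{-2L_W(0)} e^{-πiL_W(0)} e^{-z^{-1}L_W(1)} w₁, z^{-1}) w₂, v)_V for all v ∈ V, w₁, w₂ ∈ W. -/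
/- STATEMENT 12: the inverse adjoint relation between the FHL intertwining
operators Y_{WV}^W and Y_{WW}^V:
(w₂, Y_{WV}^W(w₁,z)v)_W
  = (Y_{WW}^V(z^{-2L(0)} e^{-πiL(0)} e^{-z⁻¹L(1)} w₁, z⁻¹) w₂, v)_V.
V is an (integrally) ℝ-graded quasi-vertex operator algebra with a
nondegenerate symmetric invariant bilinear form, W an (half-integrally)
ℝ-graded module with such a form; completions are modeled by ℝ-indexed
component functions; Y_{WV}^W(w,z)v := e^{zL_W(-1)} Y_W(v,-z)w, and Y_{WW}^V
is characterized by (2.2).  Operators like z^{-2L(0)}, e^{πiL(0)}, e^{zL(1)}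
are given as data with their characterizing properties as hypotheses. -/

open Finset Complex

/-- e^{zL(-1)} on a completion, componentwise (a finite sum since the grading
is truncated below N₀). -/
noncomputable def expLm1bar {W : Type} [AddCommGroup W] [Module ℂ W]
    (L : W →ₗ[ℂ] W) (N₀ : ℝ) (z : ℂ) (u : ℝ → W) : ℝ → W :=
  fun h => ∑ j ∈ Finset.range ((⌈h - N₀⌉).toNat + 1),
    (z ^ j / (j.factorial : ℂ)) • ((L ^ j) (u (h - j)))

section Aux

variable {W : Type} [AddCommGroup W] [Module ℂ W]

/-- Powers of a weight-raising operator raise weight by `j`. -/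
lemma pow_wt_up (B : ℝ → Submodule ℂ W) (L : W →ₗ[ℂ] W)
    (hL : ∀ (h : ℝ) (w : W), w ∈ B h → L w ∈ B (h + 1)) :
    ∀ (j : ℕ) (h : ℝ) (w : W), w ∈ B h → (L ^ j) w ∈ B (h + j) := by
  intro j
  induction j with
  | zero => intro h w hw; simpa using hw
  | succ j ih =>
    intro h w hw
    have h1 := hL _ _ (ih h w hw)
    have e1 : (L ^ (j + 1)) w = L ((L ^ j) w) := by
      rw [pow_succ', Module.End.mul_apply]
    have e2 : h + (j : ℝ) + 1 = h + ((j + 1 : ℕ) : ℝ) := by push_cast; ring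
    rw [e1, ← e2]
    exact h1

/-- Powers of a weight-lowering operator lower weight by `j`. -/
lemma pow_wt_down (B : ℝ → Submodule ℂ W) (L : W →ₗ[ℂ] W)
    (hL : ∀ (h : ℝ) (w : W), w ∈ B h → L w ∈ B (h - 1)) :
    ∀ (j : ℕ) (h : ℝ) (w : W), w ∈ B h → (L ^ j) w ∈ B (h - j) := by
  intro j
  induction j with
  | zero => intro h w hw; simpa using hw
  | succ j ih =>
    intro h w hw
    have h1 := hL _ _ (ih h w hw)
    have e1 : (L ^ (j + 1)) w = L ((L ^ j) w) := by
      rw [pow_succ', Module.End.mul_apply]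
    have e2 : h - (j : ℝ) - 1 = h - ((j + 1 : ℕ) : ℝ) := by push_cast; ring
    rw [e1, ← e2]
    exact h1

lemma expLm1bar_mem (B : ℝ → Submodule ℂ W) (L : W →ₗ[ℂ] W)
    (hL : ∀ (h : ℝ) (w : W), w ∈ B h → L w ∈ B (h + 1))
    (N₀ : ℝ) (z : ℂ) (u : ℝ → W) (hu : ∀ k : ℝ, u k ∈ B k) (m : ℝ) :
    expLm1bar L N₀ z u m ∈ B m := by
  unfold expLm1bar
  refine Submodule.sum_mem _ fun j _ => Submodule.smul_mem _ _ ?_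
  have h1 := pow_wt_up B L hL j (m - j) (u (m - j)) (hu _)
  have e : m - (j : ℝ) + j = m := by ring
  rwa [e] at h1

lemma expLm1bar_sum {ι : Type*} (L : W →ₗ[ℂ] W) (N₀ : ℝ) (z : ℂ)
    (s : Finset ι) (f : ι → ℝ → W) (m : ℝ) :
    expLm1bar L N₀ z (∑ j ∈ s, f j) m = ∑ j ∈ s, expLm1bar L N₀ z (f j) m := by
  unfold expLm1bar
  simp only [Finset.sum_apply, map_sum, Finset.smul_sum]
  exact Finset.sum_comm

/-- Additivity of the truncated exponential on vectors killed by `L ^ M`. -/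
lemma exp_nilpotent_comp (L : W →ₗ[ℂ] W) (a b : ℂ) (w : W) (M : ℕ)
    (hM : (L ^ M) w = 0) :
    ∑ i ∈ Finset.range M, (a ^ i / (i.factorial : ℂ)) •
        (L ^ i) (∑ j ∈ Finset.range M, (b ^ j / (j.factorial : ℂ)) • (L ^ j) w)
      = ∑ k ∈ Finset.range M, ((a + b) ^ k / (k.factorial : ℂ)) • (L ^ k) w := by
  have hzero : ∀ i j : ℕ, M ≤ i + j → (L ^ (i + j)) w = 0 := by
    intro i j hij
    have e : L ^ (i + j) = L ^ (i + j - M) * L ^ M := by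
      rw [← pow_add]; congr 1; omega
    rw [e, Module.End.mul_apply, hM, map_zero]
  have hLHS : ∑ i ∈ Finset.range M, (a ^ i / (i.factorial : ℂ)) •
        (L ^ i) (∑ j ∈ Finset.range M, (b ^ j / (j.factorial : ℂ)) • (L ^ j) w)
      = ∑ i ∈ Finset.range M, ∑ j ∈ Finset.range M,
          ((a ^ i / (i.factorial : ℂ)) * (b ^ j / (j.factorial : ℂ))) • (L ^ (i + j)) w := by
    refine Finset.sum_congr rfl fun i _ => ?_
    rw [map_sum, Finset.smul_sum]
    refine Finset.sum_congr rfl fun j _ => ?_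
    rw [map_smul, smul_smul, ← Module.End.mul_apply, ← pow_add]
  have hRHS : ∑ k ∈ Finset.range M, ((a + b) ^ k / (k.factorial : ℂ)) • (L ^ k) w
      = ∑ k ∈ Finset.range M, ∑ i ∈ Finset.range (k + 1),
          ((a ^ i / (i.factorial : ℂ)) * (b ^ (k - i) / ((k - i).factorial : ℂ))) •
            (L ^ (i + (k - i))) w := by
    refine Finset.sum_congr rfl fun k _ => ?_
    rw [add_pow, Finset.sum_div, Finset.sum_smul]
    refine Finset.sum_congr rfl fun i hi => ?_
    have hik : i ≤ k := Nat.lt_succ_iff.mp (Finset.mem_range.mp hi)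
    rw [Nat.add_sub_cancel' hik]
    congr 1
    have hfact : ((k.choose i : ℂ) * (i.factorial : ℂ)) * ((k - i).factorial : ℂ)
        = (k.factorial : ℂ) := by
      have := Nat.choose_mul_factorial_mul_factorial hik
      exact_mod_cast congrArg (Nat.cast : ℕ → ℂ) this
    have h1 : (i.factorial : ℂ) ≠ 0 := Nat.cast_ne_zero.mpr i.factorial_ne_zero
    have h2 : ((k - i).factorial : ℂ) ≠ 0 := Nat.cast_ne_zero.mpr (k - i).factorial_ne_zero
    have h3 : (k.factorial : ℂ) ≠ 0 := Nat.cast_ne_zero.mpr k.factorial_ne_zero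
    field_simp
    rw [← hfact]; ring
  rw [hLHS, hRHS]
  rw [Finset.sum_range_diag_flip M
    (fun i j => ((a ^ i / (i.factorial : ℂ)) * (b ^ j / (j.factorial : ℂ))) • (L ^ (i + j)) w)]
  refine (Finset.sum_congr rfl fun i hi => ?_).symm
  refine Finset.sum_subset (Finset.range_subset_range.mpr (Nat.sub_le M i)) ?_
  intro j hj hj'
  have : M ≤ i + j := by
    simp only [Finset.mem_range] at hj hj'
    omega
  rw [hzero i j this, smul_zero]

end Aux

/-- Pairing a vector against a graded family via a graded bilinear form gives a
finitely-supported, hence summable, family. -/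
lemma summable_graded_pair {V : Type} [AddCommGroup V] [Module ℂ V]
    (A : ℝ → Submodule ℂ V)
    (hInt : DirectSum.IsInternal fun h => A h)
    (BV : V →ₗ[ℂ] V →ₗ[ℂ] ℂ)
    (hgr : ∀ (h h' : ℝ), h ≠ h' → ∀ v ∈ A h, ∀ v' ∈ A h', BV v v' = 0)
    (v : V) (X : ℝ → V) (hX : ∀ m : ℝ, X m ∈ A m) :
    Summable (fun m : ℝ => BV v (X m)) := by
  classical
  obtain ⟨x, hx⟩ := hInt.surjective v
  have hv : v = ∑ i ∈ DFinsupp.support x, ((x i : V)) := by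
    conv_lhs => rw [← hx, ← DirectSum.sum_support_of x]
    rw [map_sum]
    exact Finset.sum_congr rfl fun i _ => DirectSum.coeAddMonoidHom_of _ i (x i)
  refine summable_of_ne_finset_zero (f := fun m : ℝ => BV v (X m)) (s := DFinsupp.support x) fun m hm => ?_
  simp only [hv, map_sum, LinearMap.coe_sum, Finset.sum_apply]
  refine Finset.sum_eq_zero fun i hi => ?_
  exact hgr i m (fun e => hm (e ▸ hi)) (x i) (x i).2 (X m) (hX m)


theorem stmt12
    -- the quasi-vertex operator algebra V
    (V : Type) [AddCommGroup V] [Module ℂ V]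
    (A : ℝ → Submodule ℂ V)
    (hIntV : DirectSum.IsInternal fun h => A h)
    (hfinV : ∀ h : ℝ, FiniteDimensional ℂ (A h))
    (N₀V : ℝ) (hbddV : ∀ h < N₀V, A h = ⊥)
    (hintA : ∀ h : ℝ, A h ≠ ⊥ → ∃ n : ℤ, (n : ℝ) = h)
    (L1V Lm1V : V →ₗ[ℂ] V)
    (hL1Vwt : ∀ (h : ℝ) (v : V), v ∈ A h → L1V v ∈ A (h - 1))
    (hLm1Vwt : ∀ (h : ℝ) (v : V), v ∈ A h → Lm1V v ∈ A (h + 1))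
    (L0V : V →ₗ[ℂ] V)
    (hL0V : ∀ (h : ℝ) (v : V), v ∈ A h → L0V v = (h : ℂ) • v)
    -- [L(-1), L(1)] = -2L(0)
    (hsl2V : Lm1V ∘ₗ L1V - L1V ∘ₗ Lm1V = (-2 : ℂ) • L0V)
    -- e^{zL_V(1)} and (-z^{-2})^{L_V(0)}, as data with defining properties
    (expL1V : ℂ → V →ₗ[ℂ] V)
    (hnilV : ∀ v : V, ∃ M : ℕ, (L1V ^ M) v = 0)
    (hexpL1V : ∀ (z : ℂ) (v : V) (M : ℕ), (L1V ^ M) v = 0 →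
      expL1V z v = ∑ j ∈ Finset.range M, (z ^ j / (j.factorial : ℂ)) • ((L1V ^ j) v))
    (negz2L0V : ℂ → V →ₗ[ℂ] V)
    (hnegz2 : ∀ (z : ℂ) (h : ℝ) (n : ℤ), (n : ℝ) = h → ∀ v ∈ A h,
      negz2L0V z v = ((-(z ^ (-2 : ℤ))) ^ n) • v)
    -- the module W, graded by ℤ or ℤ + 1/2
    (W : Type) [AddCommGroup W] [Module ℂ W]
    (B : ℝ → Submodule ℂ W)
    (hIntW : DirectSum.IsInternal fun h => B h)
    (hfinW : ∀ h : ℝ, FiniteDimensional ℂ (B h))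
    (N₀W : ℝ) (hbddW : ∀ h < N₀W, B h = ⊥)
    (hintB : ∀ h : ℝ, B h ≠ ⊥ → ∃ n : ℤ, (n : ℝ) = 2 * h)
    (L1W Lm1W : W →ₗ[ℂ] W)
    (hL1Wwt : ∀ (h : ℝ) (w : W), w ∈ B h → L1W w ∈ B (h - 1))
    (hLm1Wwt : ∀ (h : ℝ) (w : W), w ∈ B h → Lm1W w ∈ B (h + 1))
    (expL1W : ℂ → W →ₗ[ℂ] W)
    (hnilW : ∀ w : W, ∃ M : ℕ, (L1W ^ M) w = 0)
    (hexpL1W : ∀ (z : ℂ) (w : W) (M : ℕ), (L1W ^ M) w = 0 →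
      expL1W z w = ∑ j ∈ Finset.range M, (z ^ j / (j.factorial : ℂ)) • ((L1W ^ j) w))
    -- z^{-2L_W(0)}, e^{πiL_W(0)} and e^{-πiL_W(0)}
    (zpowL0W : ℂ → W →ₗ[ℂ] W)
    (hzpow : ∀ (z : ℂ) (h : ℝ) (n : ℤ), (n : ℝ) = 2 * h → ∀ w ∈ B h,
      zpowL0W z w = (z ^ (-n : ℤ)) • w)
    (phaseW phaseWinv : W →ₗ[ℂ] W)
    (hphase : ∀ (h : ℝ) (w : W), w ∈ B h →
      phaseW w = Complex.exp (Real.pi * Complex.I * h) • w)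
    (hphaseinv : ∀ (h : ℝ) (w : W), w ∈ B h →
      phaseWinv w = Complex.exp (-(Real.pi * Complex.I * h)) • w)
    -- the module vertex operator map
    (YW : ℂ → V →ₗ[ℂ] W →ₗ[ℂ] (ℝ → W))
    (hYWB : ∀ (z : ℂ) (v : V) (w : W) (h : ℝ), (YW z v w) h ∈ B h)
    -- the nondegenerate symmetric invariant bilinear forms
    (BV : V →ₗ[ℂ] V →ₗ[ℂ] ℂ) (BW : W →ₗ[ℂ] W →ₗ[ℂ] ℂ)
    (hBVsymm : ∀ v v' : V, BV v v' = BV v' v)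
    (hBVgr : ∀ (h h' : ℝ), h ≠ h' → ∀ v ∈ A h, ∀ v' ∈ A h', BV v v' = 0)
    (hBVnd : ∀ v : V, v ≠ 0 → ∃ v' : V, BV v v' ≠ 0)
    (hBWsymm : ∀ w w' : W, BW w w' = BW w' w)
    (hBWgr : ∀ (h h' : ℝ), h ≠ h' → ∀ w ∈ B h, ∀ w' ∈ B h', BW w w' = 0)
    (hBWnd : ∀ w : W, w ≠ 0 → ∃ w' : W, BW w w' ≠ 0)
    -- the adjoint of L_W(n) is L_W(-n)
    (hadjW : ∀ w w' : W, BW (Lm1W w) w' = BW w (L1W w'))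
    -- invariance of the form on W:
    -- (w₁, Y_W(v,z)w₂) = (Y_W(e^{zL(1)}(-z^{-2})^{L(0)}v, z⁻¹)w₁, w₂)
    (hinv : ∀ (z : ℂ), z ≠ 0 → ∀ (v : V) (w₁ w₂ : W),
      (∑' h : ℝ, BW w₁ ((YW z v w₂) h))
        = ∑' h : ℝ, BW ((YW z⁻¹ (expL1V z (negz2L0V z v)) w₁) h) w₂)
    -- Y_{WW}^V, defined by (2.2):
    -- (v, Y_{WW}^V(w₁,z)w₂)_V = (Y_{WV}^W(e^{zL(1)}e^{πiL(0)}z^{-2L(0)}w₁, z⁻¹)v, w₂)_W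
    -- where Y_{WV}^W(w,z)v := e^{zL_W(-1)} Y_W(v,-z) w
    (YWWV : ℂ → W →ₗ[ℂ] W →ₗ[ℂ] (ℝ → V))
    (hYWWVA : ∀ (z : ℂ) (w₁ w₂ : W) (h : ℝ), (YWWV z w₁ w₂) h ∈ A h)
    (hYWWVdef : ∀ (z : ℂ), z ≠ 0 → ∀ (v : V) (h : ℝ) (n : ℤ), (n : ℝ) = 2 * h →
      ∀ w₁ ∈ B h, ∀ w₂ : W,
      (∑' m : ℝ, BV v ((YWWV z w₁ w₂) m))
        = ∑' m : ℝ, BW ((expLm1bar Lm1W N₀W z⁻¹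
            (YW (-z⁻¹) v (expL1W z (phaseW ((z ^ (-n : ℤ)) • w₁))))) m) w₂) :
    -- conclusion: the inverse relation (2.3):
    -- (w₂, Y_{WV}^W(w₁,z)v)_W
    --   = (Y_{WW}^V(z^{-2L(0)} e^{-πiL(0)} e^{-z⁻¹L(1)} w₁, z⁻¹) w₂, v)_V
    ∀ (z : ℂ), z ≠ 0 → ∀ (h : ℝ) (n : ℤ), (n : ℝ) = 2 * h →
      ∀ w₁ ∈ B h, ∀ (w₂ : W) (v : V),
      (∑' m : ℝ, BW w₂ ((expLm1bar Lm1W N₀W z (YW (-z) v w₁)) m))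
        = ∑' m : ℝ, BV ((YWWV z⁻¹
            (zpowL0W z (phaseWinv (expL1W (-z⁻¹) w₁))) w₂) m) v := by
  intro z hz h n hn w₁ hw₁ w₂ v
  classical
  obtain ⟨M, hM⟩ := hnilW w₁
  -- weights of powers of L1W applied to w₁
  have hpowB : ∀ j : ℕ, (L1W ^ j) w₁ ∈ B (h - j) :=
    fun j => pow_wt_down B L1W hL1Wwt j h w₁ hw₁
  -- integrality cast facts
  have hcast : ∀ j : ℕ, ((n - 2 * (j : ℤ) : ℤ) : ℝ) = 2 * (h - j) := by
    intro j; push_cast; rw [hn]; ring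
  -- the coefficients of e^{-z⁻¹ L(1)} w₁
  set b : ℕ → ℂ := fun j => (-z⁻¹) ^ j / (j.factorial : ℂ) with hbdef
  have hexp1 : expL1W (-z⁻¹) w₁ = ∑ j ∈ Finset.range M, b j • (L1W ^ j) w₁ :=
    hexpL1W _ _ M hM
  -- the coefficients after applying e^{-πiL(0)} and z^{-2L(0)}
  set d : ℕ → ℂ := fun j =>
    b j * Complex.exp (-(Real.pi * Complex.I * ((h : ℂ) - (j : ℂ)))) *
      z ^ (-(n - 2 * (j : ℤ)) : ℤ) with hddef
  have hw₁' : zpowL0W z (phaseWinv (expL1W (-z⁻¹) w₁))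
      = ∑ j ∈ Finset.range M, d j • (L1W ^ j) w₁ := by
    rw [hexp1, map_sum, map_sum]
    refine Finset.sum_congr rfl fun j _ => ?_
    rw [map_smul, hphaseinv _ _ (hpowB j), map_smul, map_smul,
      hzpow z (h - j) (n - 2 * j) (hcast j) _ (hpowB j)]
    simp only [smul_smul, hddef]
    congr 1
    push_cast
    ring
  have hmemd : ∀ j : ℕ, d j • (L1W ^ j) w₁ ∈ B (h - j) :=
    fun j => Submodule.smul_mem _ _ (hpowB j)
  -- the inner vectors appearing in (2.2) at z⁻¹
  set ivec : ℕ → W := fun j =>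
    expL1W z⁻¹ (phaseW (((z⁻¹ : ℂ) ^ (-(n - 2 * (j : ℤ)) : ℤ)) •
      (d j • (L1W ^ j) w₁))) with hivecdef
  have hivec_eq : ∀ j : ℕ, ivec j = expL1W z⁻¹ (b j • (L1W ^ j) w₁) := by
    intro j
    simp only [hivecdef]
    congr 1
    rw [map_smul, map_smul, hphase _ _ (hpowB j), smul_smul, smul_smul]
    congr 1
    simp only [hddef]
    have hc : ((h - (j : ℕ) : ℝ) : ℂ) = (h : ℂ) - (j : ℂ) := by push_cast; ring
    rw [hc, inv_zpow]
    have h2 : z ^ (-(n - 2 * (j : ℤ)) : ℤ) ≠ 0 := zpow_ne_zero _ hz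
    have h4 : (z ^ (-(n - 2 * (j : ℤ)) : ℤ))⁻¹ * z ^ (-(n - 2 * (j : ℤ)) : ℤ) = 1 :=
      inv_mul_cancel₀ h2
    have h3 : Complex.exp (-(Real.pi * Complex.I * ((h : ℂ) - (j : ℂ)))) *
        Complex.exp (Real.pi * Complex.I * ((h : ℂ) - (j : ℂ))) = 1 := by
      rw [← Complex.exp_add, neg_add_cancel, Complex.exp_zero]
    linear_combination (b j * Complex.exp (-(Real.pi * Complex.I * ((h : ℂ) - (j : ℂ)))) *
        Complex.exp (Real.pi * Complex.I * ((h : ℂ) - (j : ℂ)))) * h4 + b j * h3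
  -- e^{z⁻¹L(1)} e^{-z⁻¹L(1)} w₁ = w₁
  have hMe : (L1W ^ M) (expL1W (-z⁻¹) w₁) = 0 := by
    rw [hexp1, map_sum]
    refine Finset.sum_eq_zero fun j _ => ?_
    rw [map_smul]
    have e1 : (L1W ^ M) ((L1W ^ j) w₁) = (L1W ^ j) ((L1W ^ M) w₁) := by
      rw [← Module.End.mul_apply, ← Module.End.mul_apply, ← pow_add, ← pow_add, add_comm]
    rw [e1, hM, map_zero, smul_zero]
  have hEE : expL1W z⁻¹ (expL1W (-z⁻¹) w₁) = w₁ := by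
    rw [hexpL1W z⁻¹ _ M hMe, hexp1]
    simp only [hbdef]
    rw [exp_nilpotent_comp L1W z⁻¹ (-z⁻¹) w₁ M hM]
    have e0 : (z⁻¹ + -z⁻¹ : ℂ) = 0 := by ring
    rw [e0]
    cases M with
    | zero =>
      have : w₁ = 0 := by simpa using hM
      simp [this]
    | succ m =>
      rw [Finset.sum_eq_single 0]
      · simp
      · intro j _ hj
        simp [zero_pow hj]
      · intro hmem
        exact absurd (Finset.mem_range.mpr (Nat.succ_pos m)) hmem
  have hivsum : ∑ j ∈ Finset.range M, ivec j = w₁ := by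
    calc ∑ j ∈ Finset.range M, ivec j
        = ∑ j ∈ Finset.range M, expL1W z⁻¹ (b j • (L1W ^ j) w₁) :=
          Finset.sum_congr rfl fun j _ => hivec_eq j
      _ = expL1W z⁻¹ (∑ j ∈ Finset.range M, b j • (L1W ^ j) w₁) := (map_sum _ _ _).symm
      _ = expL1W z⁻¹ (expL1W (-z⁻¹) w₁) := by rw [← hexp1]
      _ = w₁ := hEE
  -- the instance of the defining relation (2.2) at z⁻¹ for each component
  have hinner : ∀ j ∈ Finset.range M,
      (∑' m : ℝ, BV v ((YWWV z⁻¹ (d j • (L1W ^ j) w₁) w₂) m))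
        = ∑' m : ℝ, BW ((expLm1bar Lm1W N₀W z (YW (-z) v (ivec j))) m) w₂ := by
    intro j _
    have := hYWWVdef z⁻¹ (inv_ne_zero hz) v (h - j) (n - 2 * j) (hcast j)
      (d j • (L1W ^ j) w₁) (hmemd j) w₂
    rw [inv_inv] at this
    exact this
  -- summability of all families (they have finite support)
  have hsumW : ∀ j ∈ Finset.range M,
      Summable (fun m : ℝ => BW ((expLm1bar Lm1W N₀W z (YW (-z) v (ivec j))) m) w₂) := by
    intro j _
    have base : Summable (fun m : ℝ =>
        BW w₂ ((expLm1bar Lm1W N₀W z (YW (-z) v (ivec j))) m)) :=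
      summable_graded_pair B hIntW BW hBWgr w₂ _
        (fun m => expLm1bar_mem B Lm1W hLm1Wwt N₀W z _ (fun k => hYWB _ _ _ k) m)
    exact (summable_congr fun m => hBWsymm _ _).mpr base
  have hsumV : ∀ j ∈ Finset.range M,
      Summable (fun m : ℝ => BV v ((YWWV z⁻¹ (d j • (L1W ^ j) w₁) w₂) m)) :=
    fun j _ => summable_graded_pair A hIntV BV hBVgr v _ (fun m => hYWWVA _ _ _ m)
  -- the main chain of equalities
  calc ∑' m : ℝ, BW w₂ ((expLm1bar Lm1W N₀W z (YW (-z) v w₁)) m)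
      = ∑' m : ℝ, BW ((expLm1bar Lm1W N₀W z (YW (-z) v w₁)) m) w₂ :=
        tsum_congr fun m => hBWsymm _ _
    _ = ∑' m : ℝ, ∑ j ∈ Finset.range M,
          BW ((expLm1bar Lm1W N₀W z (YW (-z) v (ivec j))) m) w₂ := by
        refine tsum_congr fun m => ?_
        conv_lhs => rw [← hivsum]
        rw [map_sum, expLm1bar_sum, map_sum, LinearMap.sum_apply]
    _ = ∑ j ∈ Finset.range M, ∑' m : ℝ,
          BW ((expLm1bar Lm1W N₀W z (YW (-z) v (ivec j))) m) w₂ := Summable.tsum_finsetSum hsumW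
    _ = ∑ j ∈ Finset.range M, ∑' m : ℝ,
          BV v ((YWWV z⁻¹ (d j • (L1W ^ j) w₁) w₂) m) :=
        Finset.sum_congr rfl fun j hj => (hinner j hj).symm
    _ = ∑' m : ℝ, ∑ j ∈ Finset.range M,
          BV v ((YWWV z⁻¹ (d j • (L1W ^ j) w₁) w₂) m) := (Summable.tsum_finsetSum hsumV).symm
    _ = ∑' m : ℝ, BV v ((YWWV z⁻¹
          (zpowL0W z (phaseWinv (expL1W (-z⁻¹) w₁))) w₂) m) := by
        refine tsum_congr fun m => ?_
        rw [hw₁', map_sum, LinearMap.sum_apply, Finset.sum_apply, map_sum]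
    _ = ∑' m : ℝ, BV ((YWWV z⁻¹
          (zpowL0W z (phaseWinv (expL1W (-z⁻¹) w₁))) w₂) m) v :=
        tsum_congr fun m => hBVsymm _ _
end
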